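/- arXiv:2112.00411 — 10 statements merged into one kernel-verified Lean document; each statement's English description precedes it below -/
import Mathlib

section
/- Let Ω, Ω' ⊆ ℂ be open sets, let ψ : ℂ → ℂ be injective on Ω' with ψ(Ω') = Ω, differentiable at every point of Ω', and let K ≥ 1 be a real number such that ‖Dψ(y)‖² ≤ K·|det Dψ(y)| for every y ∈ Ω'. Then for every f : ℂ → ℝ that is differentiable at every point of Ω, the Dirichlet energies satisfy ∫⁻_{Ω'} ‖D(f∘ψ)(y)‖² dy ≤ K · ∫⁻_{Ω} ‖Df(x)‖² dx, where both sides are Lebesgue integrals with values in [0,∞]. -/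
open MeasureTheory

/-- Quasiconformal maps quasi-preserve the Dirichlet energy (the
composition-operator bound of Lemma 4.1), for everywhere-differentiable maps:
if `ψ` is injective on `Ω'` with `ψ(Ω') = Ω`, differentiable on `Ω'`, and
`‖Dψ‖² ≤ K·|det Dψ|` on `Ω'`, then
`∫⁻_{Ω'} ‖D(f∘ψ)‖² ≤ K · ∫⁻_{Ω} ‖Df‖²`. -/
theorem dirichlet_energy_composition_quasiconformal
    (Ω Ω' : Set ℂ) (hΩ : IsOpen Ω) (hΩ' : IsOpen Ω')
    (ψ : ℂ → ℂ) (hinj : Set.InjOn ψ Ω') (himg : ψ '' Ω' = Ω)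
    (hdψ : ∀ y ∈ Ω', DifferentiableAt ℝ ψ y)
    (K : ℝ) (hK : 1 ≤ K)
    (hqc : ∀ y ∈ Ω',
      ‖fderiv ℝ ψ y‖ ^ 2 ≤ K * |LinearMap.det (fderiv ℝ ψ y).toLinearMap|)
    (f : ℂ → ℝ) (hdf : ∀ x ∈ Ω, DifferentiableAt ℝ f x) :
    ∫⁻ y in Ω', ENNReal.ofReal (‖fderiv ℝ (f ∘ ψ) y‖ ^ 2) ≤
      ENNReal.ofReal K * ∫⁻ x in Ω, ENNReal.ofReal (‖fderiv ℝ f x‖ ^ 2) := by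
  have hchg : ∫⁻ x in Ω, ENNReal.ofReal (‖fderiv ℝ f x‖ ^ 2) =
      ∫⁻ y in Ω', ENNReal.ofReal |(fderiv ℝ ψ y).det| *
        ENNReal.ofReal (‖fderiv ℝ f (ψ y)‖ ^ 2) := by
    rw [← himg]
    exact lintegral_image_eq_lintegral_abs_det_fderiv_mul volume hΩ'.measurableSet
      (fun y hy => ((hdψ y hy).hasFDerivAt).hasFDerivWithinAt) hinj _
  rw [hchg, ← lintegral_const_mul' _ _ ENNReal.ofReal_ne_top]
  refine setLIntegral_mono' hΩ'.measurableSet fun y hy => ?_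
  have hmem : ψ y ∈ Ω := himg ▸ Set.mem_image_of_mem ψ hy
  have hcomp : fderiv ℝ (f ∘ ψ) y = (fderiv ℝ f (ψ y)).comp (fderiv ℝ ψ y) :=
    fderiv_comp y (hdf _ hmem) (hdψ y hy)
  have hnorm : ‖fderiv ℝ (f ∘ ψ) y‖ ^ 2 ≤
      K * |(fderiv ℝ ψ y).det| * ‖fderiv ℝ f (ψ y)‖ ^ 2 := by
    have h1 : ‖fderiv ℝ (f ∘ ψ) y‖ ≤ ‖fderiv ℝ f (ψ y)‖ * ‖fderiv ℝ ψ y‖ := by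
      rw [hcomp]; exact ContinuousLinearMap.opNorm_comp_le _ _
    have h2 : ‖fderiv ℝ (f ∘ ψ) y‖ ^ 2 ≤ ‖fderiv ℝ f (ψ y)‖ ^ 2 * ‖fderiv ℝ ψ y‖ ^ 2 := by
      rw [← mul_pow]
      exact pow_le_pow_left₀ (norm_nonneg _) h1 2
    have h3 := hqc y hy
    calc ‖fderiv ℝ (f ∘ ψ) y‖ ^ 2 ≤ ‖fderiv ℝ f (ψ y)‖ ^ 2 * ‖fderiv ℝ ψ y‖ ^ 2 := h2
      _ ≤ ‖fderiv ℝ f (ψ y)‖ ^ 2 * (K * |(fderiv ℝ ψ y).det|) := by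
          exact mul_le_mul_of_nonneg_left h3 (sq_nonneg _)
      _ = K * |(fderiv ℝ ψ y).det| * ‖fderiv ℝ f (ψ y)‖ ^ 2 := by ring
  calc ENNReal.ofReal (‖fderiv ℝ (f ∘ ψ) y‖ ^ 2)
      ≤ ENNReal.ofReal (K * |(fderiv ℝ ψ y).det| * ‖fderiv ℝ f (ψ y)‖ ^ 2) :=
        ENNReal.ofReal_le_ofReal hnorm
    _ = ENNReal.ofReal K * (ENNReal.ofReal |(fderiv ℝ ψ y).det| *
          ENNReal.ofReal (‖fderiv ℝ f (ψ y)‖ ^ 2)) := by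
        rw [ENNReal.ofReal_mul (by positivity), ENNReal.ofReal_mul (by positivity), mul_assoc]
end

section
/- Let Ω, Ω' ⊆ ℂ be open sets, let φ : ℂ → ℂ restrict to a homeomorphism from Ω onto Ω' that is differentiable at every point of Ω and whose inverse is differentiable at every point of Ω', and let K ≥ 1 satisfy ‖Dφ(x)‖² ≤ K·|det Dφ(x)| for every x ∈ Ω. Let r ≥ 2 and let A ∈ [0,∞] be such that every g : ℂ → ℝ that is differentiable at every point of ℂ with topological support a compact subset of Ω' satisfies (∫⁻_{Ω'} |g(y)|^r dy)^{1/r} ≤ A · (∫⁻_{Ω'} ‖Dg(y)‖² dy)^{1/2}. Then every f : ℂ → ℝ that is differentiable at every point of ℂ with topological support a compact subset of Ω satisfies the weighted Sobolev–Poincaré inequality (∫⁻_{Ω} |f(x)|^r · |det Dφ(x)| dx)^{1/r} ≤ K^{1/2} · A · (∫⁻_{Ω} ‖Df(x)‖² dx)^{1/2}. -/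
open MeasureTheory ENNReal Set
open scoped Manifold

lemma det_formula (L : ℂ →ₗ[ℝ] ℂ) :
    LinearMap.det L = ((starRingEnd ℂ) (L 1) * L Complex.I).im := by
  rw [← LinearMap.det_toMatrix Complex.basisOneI L, Matrix.det_fin_two]
  simp [LinearMap.toMatrix_apply, Complex.mul_im]
  ring

lemma det_mul_norm_sq_le (T : ℂ →L[ℝ] ℂ) (w : ℂ) :
    |LinearMap.det T.toLinearMap| * ‖w‖ ^ 2 ≤ ‖T‖ * ‖T w‖ * ‖w‖ := by
  set m : ℂ →ₗ[ℝ] ℂ := LinearMap.mul ℝ ℂ w with hm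
  have hmdet : LinearMap.det m = ‖w‖ ^ 2 := by
    rw [det_formula]
    simp [hm, LinearMap.mul_apply_apply, Complex.normSq_eq_norm_sq]
    rw [← Complex.normSq_apply, Complex.normSq_eq_norm_sq, Complex.sq_norm, Complex.normSq_apply]
  have hcomp : LinearMap.det (T.toLinearMap ∘ₗ m) = LinearMap.det T.toLinearMap * ‖w‖ ^ 2 := by
    rw [LinearMap.det_comp, hmdet]
  have key : |LinearMap.det (T.toLinearMap ∘ₗ m)| ≤ ‖T w‖ * ‖T (w * Complex.I)‖ := by
    rw [det_formula]
    have h1 : (T.toLinearMap ∘ₗ m) 1 = T w := by simp [hm, LinearMap.mul_apply_apply]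
    have h2 : (T.toLinearMap ∘ₗ m) Complex.I = T (w * Complex.I) := by
      simp [hm, LinearMap.mul_apply_apply]
    rw [h1, h2]
    calc |((starRingEnd ℂ) (T w) * T (w * Complex.I)).im|
        ≤ ‖(starRingEnd ℂ) (T w) * T (w * Complex.I)‖ := Complex.abs_im_le_norm _
      _ = ‖T w‖ * ‖T (w * Complex.I)‖ := by
          rw [norm_mul]; simp
  have h3 : ‖T (w * Complex.I)‖ ≤ ‖T‖ * ‖w‖ := by
    calc ‖T (w * Complex.I)‖ ≤ ‖T‖ * ‖w * Complex.I‖ := T.le_opNorm _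
      _ = ‖T‖ * ‖w‖ := by simp
  calc |LinearMap.det T.toLinearMap| * ‖w‖ ^ 2
      = |LinearMap.det (T.toLinearMap ∘ₗ m)| := by
        rw [hcomp, abs_mul]; simp [_root_.abs_of_nonneg (sq_nonneg ‖w‖)]
    _ ≤ ‖T w‖ * ‖T (w * Complex.I)‖ := key
    _ ≤ ‖T w‖ * (‖T‖ * ‖w‖) := by gcongr
    _ = ‖T‖ * ‖T w‖ * ‖w‖ := by ring

lemma op_ineq (T U : ℂ →L[ℝ] ℂ) (S : ℂ →L[ℝ] ℝ)
    (hUT : ∀ v, U (T v) = v)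
    (K : ℝ)
    (hqcT : ‖T‖ ^ 2 ≤ K * |LinearMap.det T.toLinearMap|) :
    |LinearMap.det T.toLinearMap| * ‖S.comp U‖ ^ 2 ≤ K * ‖S‖ ^ 2 := by
  set d := |LinearMap.det T.toLinearMap| with hd
  have hUsurj : Function.Surjective (U.toLinearMap) := fun v => ⟨T v, hUT v⟩
  have hUinj : Function.Injective (U.toLinearMap) :=
    LinearMap.injective_iff_surjective.mpr hUsurj
  have hTU : ∀ v, T (U v) = v := fun v => hUinj (by simpa using hUT (U v))
  have hdpos : 0 ≤ d := abs_nonneg _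
  have hkey : ∀ v : ℂ, d * ‖U v‖ ≤ ‖T‖ * ‖v‖ := by
    intro v
    rcases eq_or_ne (U v) 0 with h | h
    · simp [h]; positivity
    · have hn : 0 < ‖U v‖ := norm_pos_iff.mpr h
      have := det_mul_norm_sq_le T (U v)
      rw [hTU v] at this
      nlinarith [this, hn]
  have hcomp : ∀ v : ℂ, ‖(S.comp U) v‖ * d ≤ ‖S‖ * ‖T‖ * ‖v‖ := by
    intro v
    calc ‖(S.comp U) v‖ * d = ‖S (U v)‖ * d := rfl
      _ ≤ (‖S‖ * ‖U v‖) * d := by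
          have := S.le_opNorm (U v); nlinarith [this, norm_nonneg (S (U v))]
      _ = ‖S‖ * (d * ‖U v‖) := by ring
      _ ≤ ‖S‖ * (‖T‖ * ‖v‖) := by
          have := hkey v; nlinarith [norm_nonneg S]
      _ = ‖S‖ * ‖T‖ * ‖v‖ := by ring
  have hSU : ‖S.comp U‖ * d ≤ ‖S‖ * ‖T‖ := by
    rcases eq_or_ne d 0 with h | h
    · simp [h]; positivity
    · have hdp : 0 < d := lt_of_le_of_ne hdpos (Ne.symm h)
      have : ‖S.comp U‖ ≤ ‖S‖ * ‖T‖ / d := by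
        apply ContinuousLinearMap.opNorm_le_bound
        · positivity
        · intro v
          rw [div_mul_eq_mul_div, le_div_iff₀ hdp]
          exact hcomp v
      calc ‖S.comp U‖ * d ≤ (‖S‖ * ‖T‖ / d) * d := by nlinarith [this]
        _ = ‖S‖ * ‖T‖ := by field_simp
  rcases eq_or_ne d 0 with h | h
  · exfalso
    rw [h, mul_zero] at hqcT
    have hT0 : ‖T‖ = 0 := by nlinarith [norm_nonneg T]
    have : T = 0 := norm_eq_zero.mp hT0
    have h1 := hUT 1
    rw [this] at h1
    simp at h1
  · have hdp : 0 < d := lt_of_le_of_ne hdpos (Ne.symm h)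
    have h1 : (‖S.comp U‖ * d)^2 ≤ (‖S‖ * ‖T‖)^2 := by
      have h0 : 0 ≤ ‖S.comp U‖ * d := by positivity
      nlinarith [hSU, h0]
    have h2 : d * ‖S.comp U‖^2 * d ≤ ‖S‖^2 * ‖T‖^2 := by nlinarith [h1]
    have h3 : ‖S‖^2 * ‖T‖^2 ≤ ‖S‖^2 * (K * d) := by nlinarith [sq_nonneg ‖S‖, hqcT]
    have := le_trans h2 h3
    calc d * ‖S.comp U‖^2 = (d * ‖S.comp U‖^2 * d) / d := by field_simp
      _ ≤ (‖S‖^2 * (K * d)) / d := by gcongr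
      _ = K * ‖S‖^2 := by field_simp

lemma cutoff_exists (C U : Set ℂ) (hC : IsCompact C) (hU : IsOpen U) (hCU : C ⊆ U) :
    ∃ χ : ℂ → ℝ, (∀ z, DifferentiableAt ℝ χ z) ∧ IsCompact (tsupport χ) ∧
      tsupport χ ⊆ U ∧ Set.EqOn χ 1 C := by
  obtain ⟨L, hL, hCL, hLU⟩ := exists_compact_between hC hU hCU
  obtain ⟨χ, h1, h0, -⟩ :=
    exists_contMDiffMap_one_nhds_of_subset_interior 𝓘(ℝ, ℂ) (n := ⊤) (s := C) (t := L) hC.isClosed hCL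
  have hts : tsupport (⇑χ) ⊆ L := by
    apply closure_minimal _ hL.isClosed
    intro x hx
    by_contra hxL
    exact hx (h0 x hxL)
  refine ⟨χ, ?_, ?_, hts.trans hLU, ?_⟩
  · intro z
    have hsm := contMDiff_iff_contDiff.mp χ.contMDiff
    exact (hsm.differentiable (by simp)).differentiableAt
  · exact hL.of_isClosed_subset isClosed_closure hts
  · intro x hx
    exact h1.self_of_nhdsSet x hx

/-- The weighted Sobolev–Poincaré inequality `A_{r,2}(h,Ω) ≤ K^{1/2} A_{r,2}(Ω')`
(Theorem 4 of the paper) for everywhere-differentiable quasiconformal maps,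
with quasihyperbolic weight `h(x) = |det Dφ(x)|`. -/
theorem weighted_sobolev_poincare
    (Ω Ω' : Set ℂ) (hΩ : IsOpen Ω) (hΩ' : IsOpen Ω')
    (φ φinv : ℂ → ℂ)
    (himg : φ '' Ω = Ω')
    (hinv : ∀ x ∈ Ω, φinv (φ x) = x)
    (hdφ : ∀ x ∈ Ω, DifferentiableAt ℝ φ x)
    (hdφinv : ∀ y ∈ Ω', DifferentiableAt ℝ φinv y)
    (K : ℝ) (hK : 1 ≤ K)
    (hqc : ∀ x ∈ Ω,
      ‖fderiv ℝ φ x‖ ^ 2 ≤ K * |LinearMap.det (fderiv ℝ φ x).toLinearMap|)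
    (r : ℝ) (hr : 2 ≤ r) (A : ℝ≥0∞)
    (hA : ∀ g : ℂ → ℝ, (∀ z, DifferentiableAt ℝ g z) →
      IsCompact (tsupport g) → tsupport g ⊆ Ω' →
      (∫⁻ y in Ω', ENNReal.ofReal (|g y| ^ r)) ^ (1 / r) ≤
        A * (∫⁻ y in Ω', ENNReal.ofReal (‖fderiv ℝ g y‖ ^ 2)) ^ ((1 : ℝ) / 2))
    (f : ℂ → ℝ) (hdf : ∀ z, DifferentiableAt ℝ f z)
    (hfsupp : IsCompact (tsupport f)) (hfsub : tsupport f ⊆ Ω) :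
    (∫⁻ x in Ω, ENNReal.ofReal (|f x| ^ r) *
        ENNReal.ofReal |LinearMap.det (fderiv ℝ φ x).toLinearMap|) ^ (1 / r) ≤
      (ENNReal.ofReal K) ^ ((1 : ℝ) / 2) * A *
        (∫⁻ x in Ω, ENNReal.ofReal (‖fderiv ℝ f x‖ ^ 2)) ^ ((1 : ℝ) / 2) := by
  classical
  have hφc : ContinuousOn φ (tsupport f) := fun x hx =>
    (hdφ x (hfsub hx)).continuousAt.continuousWithinAt
  set C : Set ℂ := φ '' tsupport f with hC
  have hCcomp : IsCompact C := hfsupp.image_of_continuousOn hφc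
  have hCsub : C ⊆ Ω' := by
    rw [hC, ← himg]; exact Set.image_mono hfsub
  obtain ⟨χ, hχd, hχcomp, hχsub, hχ1⟩ := cutoff_exists C Ω' hCcomp hΩ' hCsub
  set g : ℂ → ℝ := fun y => χ y * f (φinv y) with hgdef
  have hmem : ∀ y ∈ Ω', φinv y ∈ Ω ∧ φ (φinv y) = y := by
    intro y hy
    rw [← himg] at hy
    obtain ⟨x, hx, rfl⟩ := hy
    rw [hinv x hx]
    exact ⟨hx, rfl⟩
  have hg_eq : ∀ y ∈ Ω', g y = f (φinv y) := by
    intro y hy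
    rcases eq_or_ne (f (φinv y)) 0 with h | h
    · simp [hgdef, h]
    · have hts : φinv y ∈ tsupport f := subset_closure h
      have hyC : y ∈ C := ⟨φinv y, hts, (hmem y hy).2⟩
      simp [hgdef, hχ1 hyC]
  have hgd : ∀ z, DifferentiableAt ℝ g z := by
    intro z
    by_cases hz : z ∈ Ω'
    · exact (hχd z).mul ((hdf (φinv z)).comp z (hdφinv z hz))
    · have hzn : z ∉ tsupport χ := fun h => hz (hχsub h)
      have h0 : g =ᶠ[nhds z] (fun _ => (0 : ℝ)) := by
        have hmem0 : (tsupport χ)ᶜ ∈ nhds z :=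
          (isClosed_tsupport χ).isOpen_compl.mem_nhds hzn
        filter_upwards [hmem0] with y hy
        have : χ y = 0 := image_eq_zero_of_notMem_tsupport hy
        simp [hgdef, this]
      exact (differentiableAt_const (0 : ℝ)).congr_of_eventuallyEq h0
  have hgsupp_sub : tsupport g ⊆ tsupport χ := by
    apply closure_mono
    intro y hy
    simp only [Function.mem_support, hgdef] at hy ⊢
    exact fun h => hy (by simp [h])
  have hgcomp : IsCompact (tsupport g) :=
    hχcomp.of_isClosed_subset (isClosed_tsupport g) hgsupp_sub
  have hgsub : tsupport g ⊆ Ω' := hgsupp_sub.trans hχsub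
  have hfd' : ∀ x ∈ Ω, HasFDerivWithinAt φ (fderiv ℝ φ x) Ω x := fun x hx =>
    ((hdφ x hx).hasFDerivAt).hasFDerivWithinAt
  have hinj : Set.InjOn φ Ω := fun a ha b hb h => by
    rw [← hinv a ha, ← hinv b hb, h]
  have hCoV := fun (G : ℂ → ℝ≥0∞) =>
    lintegral_image_eq_lintegral_abs_det_fderiv_mul volume hΩ.measurableSet hfd' hinj G
  simp only [himg] at hCoV
  -- LHS identification
  have hL : (∫⁻ x in Ω, ENNReal.ofReal (|f x| ^ r) *
        ENNReal.ofReal |LinearMap.det (fderiv ℝ φ x).toLinearMap|)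
      = ∫⁻ y in Ω', ENNReal.ofReal (|g y| ^ r) := by
    rw [hCoV (fun y => ENNReal.ofReal (|g y| ^ r))]
    apply setLIntegral_congr_fun hΩ.measurableSet
    intro x hx
    have hgφ : g (φ x) = f x := by
      rcases eq_or_ne (f x) 0 with h | h
      · simp [hgdef, hinv x hx, h]
      · have hxC : φ x ∈ C := ⟨x, subset_closure h, rfl⟩
        simp [hgdef, hχ1 hxC, hinv x hx]
    beta_reduce
    rw [hgφ, mul_comm]
  -- RHS estimate
  have hR : (∫⁻ y in Ω', ENNReal.ofReal (‖fderiv ℝ g y‖ ^ 2))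
      ≤ ENNReal.ofReal K * ∫⁻ x in Ω, ENNReal.ofReal (‖fderiv ℝ f x‖ ^ 2) := by
    rw [hCoV (fun y => ENNReal.ofReal (‖fderiv ℝ g y‖ ^ 2)),
      ← lintegral_const_mul' (ENNReal.ofReal K) _ ENNReal.ofReal_ne_top]
    apply setLIntegral_mono' hΩ.measurableSet
    intro x hx
    have hφx : φ x ∈ Ω' := by rw [← himg]; exact ⟨x, hx, rfl⟩
    set T := fderiv ℝ φ x with hT
    set U := fderiv ℝ φinv (φ x) with hU
    set S := fderiv ℝ f x with hS
    have hgev : g =ᶠ[nhds (φ x)] (fun y => f (φinv y)) := by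
      filter_upwards [hΩ'.mem_nhds hφx] with y hy using hg_eq y hy
    have h1 : fderiv ℝ g (φ x) = fderiv ℝ (fun y => f (φinv y)) (φ x) := hgev.fderiv_eq
    have h2 : fderiv ℝ (fun y => f (φinv y)) (φ x) = S.comp U := by
      have hc : fderiv ℝ (f ∘ φinv) (φ x) =
          (fderiv ℝ f (φinv (φ x))).comp (fderiv ℝ φinv (φ x)) :=
        fderiv_comp (φ x) (hdf (φinv (φ x))) (hdφinv (φ x) hφx)
      rw [show (fun y => f (φinv y)) = f ∘ φinv from rfl, hc, hinv x hx]
    have hid : ∀ v, U (T v) = v := by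
      have hev : (fun z => φinv (φ z)) =ᶠ[nhds x] id := by
        filter_upwards [hΩ.mem_nhds hx] with z hz using hinv z hz
      have h3 : fderiv ℝ (fun z => φinv (φ z)) x = ContinuousLinearMap.id ℝ ℂ := by
        rw [hev.fderiv_eq]; exact fderiv_id
      have h4 : fderiv ℝ (fun z => φinv (φ z)) x = U.comp T := by
        rw [show (fun z => φinv (φ z)) = φinv ∘ φ from rfl,
          fderiv_comp x (hdφinv (φ x) hφx) (hdφ x hx)]
      intro v
      have h5 := congrArg (fun (L : ℂ →L[ℝ] ℂ) => L v) (h4.symm.trans h3)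
      simpa using h5
    have hmain := op_ineq T U S hid K (hqc x hx)
    rw [h1, h2]
    calc ENNReal.ofReal |LinearMap.det T.toLinearMap| * ENNReal.ofReal (‖S.comp U‖ ^ 2)
        = ENNReal.ofReal (|LinearMap.det T.toLinearMap| * ‖S.comp U‖ ^ 2) :=
          (ENNReal.ofReal_mul (abs_nonneg _)).symm
      _ ≤ ENNReal.ofReal (K * ‖S‖ ^ 2) := ENNReal.ofReal_le_ofReal hmain
      _ = ENNReal.ofReal K * ENNReal.ofReal (‖S‖ ^ 2) := ENNReal.ofReal_mul (by linarith)
  -- assemble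
  calc (∫⁻ x in Ω, ENNReal.ofReal (|f x| ^ r) *
        ENNReal.ofReal |LinearMap.det (fderiv ℝ φ x).toLinearMap|) ^ (1 / r)
      = (∫⁻ y in Ω', ENNReal.ofReal (|g y| ^ r)) ^ (1 / r) := by rw [hL]
    _ ≤ A * (∫⁻ y in Ω', ENNReal.ofReal (‖fderiv ℝ g y‖ ^ 2)) ^ ((1 : ℝ) / 2) :=
        hA g hgd hgcomp hgsub
    _ ≤ A * (ENNReal.ofReal K * ∫⁻ x in Ω, ENNReal.ofReal (‖fderiv ℝ f x‖ ^ 2)) ^ ((1 : ℝ) / 2) := by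
        gcongr
    _ = (ENNReal.ofReal K) ^ ((1 : ℝ) / 2) * A *
        (∫⁻ x in Ω, ENNReal.ofReal (‖fderiv ℝ f x‖ ^ 2)) ^ ((1 : ℝ) / 2) := by
        rw [ENNReal.mul_rpow_of_nonneg _ _ (by norm_num : (0:ℝ) ≤ 1 / 2)]
        ring
end

section
/- Let Ω, Ω' ⊆ ℂ be open sets, let ψ : ℂ → ℂ restrict to a homeomorphism from Ω' onto Ω that is differentiable at every point of Ω', and let K ≥ 1 and M > 0 be real numbers such that ‖Dψ(y)‖² ≤ K·|det Dψ(y)| and |det Dψ(y)| ≤ M for every y ∈ Ω'. Let λ ≥ 0 be a real number such that every g : ℂ → ℝ that is differentiable at every point of ℂ with topological support a compact subset of Ω' satisfies λ · ∫⁻_{Ω'} |g(y)|² dy ≤ ∫⁻_{Ω'} ‖Dg(y)‖² dy. Then every f : ℂ → ℝ that is differentiable at every point of ℂ with topological support a compact subset of Ω satisfies λ · ∫⁻_{Ω} |f(x)|² dx ≤ K · M · ∫⁻_{Ω} ‖Df(x)‖² dx. -/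
open MeasureTheory ENNReal

/-- The lower estimate `λ₁(Ω) ≥ λ₁(Ω')/(K·‖J_ψ‖_{L^∞(Ω')})` for the principal
Dirichlet-Laplacian eigenvalue (Theorems 5 and 6 of the paper), expressed via
Poincaré constants: if `ψ` restricts to a homeomorphism from `Ω'` onto `Ω`,
differentiable on `Ω'`, with `‖Dψ‖² ≤ K·|det Dψ|` and `|det Dψ| ≤ M` on `Ω'`,
and `λ` is a Poincaré constant for `Ω'`, then `λ/(K·M)` works for `Ω`. -/
theorem principal_eigenvalue_lower_estimate
    (Ω Ω' : Set ℂ) (hΩ : IsOpen Ω) (hΩ' : IsOpen Ω')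
    (ψ : ℂ → ℂ) (e : ↥Ω' ≃ₜ ↥Ω) (he : ∀ y : ↥Ω', (e y : ℂ) = ψ y)
    (hdψ : ∀ y ∈ Ω', DifferentiableAt ℝ ψ y)
    (K M : ℝ) (hK : 1 ≤ K) (hM : 0 < M)
    (hqc : ∀ y ∈ Ω',
      ‖fderiv ℝ ψ y‖ ^ 2 ≤ K * |LinearMap.det (fderiv ℝ ψ y).toLinearMap|)
    (hjac : ∀ y ∈ Ω', |LinearMap.det (fderiv ℝ ψ y).toLinearMap| ≤ M)
    (lam : ℝ) (hlam : 0 ≤ lam)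
    (hpoincare : ∀ g : ℂ → ℝ, (∀ z, DifferentiableAt ℝ g z) →
      IsCompact (tsupport g) → tsupport g ⊆ Ω' →
      ENNReal.ofReal lam * ∫⁻ y in Ω', ENNReal.ofReal (|g y| ^ 2) ≤
        ∫⁻ y in Ω', ENNReal.ofReal (‖fderiv ℝ g y‖ ^ 2))
    (f : ℂ → ℝ) (hdf : ∀ z, DifferentiableAt ℝ f z)
    (hfsupp : IsCompact (tsupport f)) (hfsub : tsupport f ⊆ Ω) :
    ENNReal.ofReal lam * ∫⁻ x in Ω, ENNReal.ofReal (|f x| ^ 2) ≤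
      ENNReal.ofReal K * ENNReal.ofReal M *
        ∫⁻ x in Ω, ENNReal.ofReal (‖fderiv ℝ f x‖ ^ 2) := by
  classical
  have hψmem : ∀ y ∈ Ω', ψ y ∈ Ω := fun y hy => by
    rw [← he ⟨y, hy⟩]; exact (e ⟨y, hy⟩).2
  have hinj : Set.InjOn ψ Ω' := by
    intro a ha b hb hab
    have : e ⟨a, ha⟩ = e ⟨b, hb⟩ := Subtype.ext (by rw [he, he]; exact hab)
    simpa using congrArg Subtype.val (e.injective this)
  have himg : ψ '' Ω' = Ω := by
    apply Set.Subset.antisymm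
    · rintro _ ⟨y, hy, rfl⟩; exact hψmem y hy
    · intro x hx
      refine ⟨(e.symm ⟨x, hx⟩ : ℂ), (e.symm ⟨x, hx⟩).2, ?_⟩
      rw [← he]; simp
  set g : ℂ → ℝ := Ω'.indicator (fun z => f (ψ z)) with hg
  set T := tsupport f with hT
  set S : Set ℂ := Subtype.val '' (e.symm '' (Subtype.val ⁻¹' T : Set ↥Ω)) with hS
  have hTΩ : T ⊆ Ω := hfsub
  have hpreT : IsCompact (Subtype.val ⁻¹' T : Set ↥Ω) := by
    rw [Topology.IsEmbedding.subtypeVal.isCompact_iff]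
    rwa [Set.image_preimage_eq_of_subset (by simpa using hTΩ)]
  have hScomp : IsCompact S := (hpreT.image e.symm.continuous).image continuous_subtype_val
  have hSsub : S ⊆ Ω' := by rintro _ ⟨y, _, rfl⟩; exact y.2
  have hsupp : Function.support g ⊆ S := by
    intro z hz
    have hzΩ' : z ∈ Ω' := by
      by_contra h
      exact hz (Set.indicator_of_notMem h _)
    have hfz : f (ψ z) ≠ 0 := by
      intro h
      exact hz (by simp [hg, Set.indicator_apply, h])
    have hψT : ψ z ∈ T := subset_tsupport f hfz
    refine ⟨e.symm ⟨ψ z, hTΩ hψT⟩, ⟨⟨ψ z, hTΩ hψT⟩, hψT, rfl⟩, ?_⟩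
    have h2 : e ⟨z, hzΩ'⟩ = ⟨ψ z, hTΩ hψT⟩ := Subtype.ext (he _)
    rw [← h2, e.symm_apply_apply]
  have htsupp : tsupport g ⊆ S := closure_minimal hsupp hScomp.isClosed
  have hgcomp : IsCompact (tsupport g) :=
    hScomp.of_isClosed_subset (isClosed_tsupport g) htsupp
  have hgsub : tsupport g ⊆ Ω' := htsupp.trans hSsub
  have hglocal : ∀ y ∈ Ω', g =ᶠ[nhds y] fun z => f (ψ z) := fun y hy => by
    filter_upwards [hΩ'.mem_nhds hy] with z hz
    exact Set.indicator_of_mem hz _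
  have hdg : ∀ z, DifferentiableAt ℝ g z := by
    intro z
    by_cases hz : z ∈ Ω'
    · exact ((hdf (ψ z)).comp z (hdψ z hz)).congr_of_eventuallyEq (hglocal z hz)
    · have hzS : z ∉ S := fun h => hz (hSsub h)
      have hev : g =ᶠ[nhds z] fun _ => (0 : ℝ) := by
        filter_upwards [hScomp.isClosed.isOpen_compl.mem_nhds hzS] with w hw
        exact Function.notMem_support.mp (fun h => hw (hsupp h))
      exact (differentiableAt_const (0 : ℝ)).congr_of_eventuallyEq hev
  have hfderivg : ∀ y ∈ Ω',
      fderiv ℝ g y = (fderiv ℝ f (ψ y)).comp (fderiv ℝ ψ y) := by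
    intro y hy
    rw [(hglocal y hy).fderiv_eq]
    exact fderiv_comp y (hdf (ψ y)) (hdψ y hy)
  have hΩ'm : MeasurableSet Ω' := hΩ'.measurableSet
  have hderivin : ∀ y ∈ Ω', HasFDerivWithinAt ψ (fderiv ℝ ψ y) Ω' y := fun y hy =>
    ((hdψ y hy).hasFDerivAt).hasFDerivWithinAt
  have cov : ∀ F : ℂ → ℝ≥0∞, ∫⁻ x in Ω, F x =
      ∫⁻ y in Ω',
        ENNReal.ofReal |LinearMap.det (fderiv ℝ ψ y).toLinearMap| * F (ψ y) := by
    intro F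
    rw [← himg]
    exact lintegral_image_eq_lintegral_abs_det_fderiv_mul volume hΩ'm hderivin hinj F
  have step1 : ∫⁻ x in Ω, ENNReal.ofReal (|f x| ^ 2) ≤
      ENNReal.ofReal M * ∫⁻ y in Ω', ENNReal.ofReal (|g y| ^ 2) := by
    rw [cov (fun x => ENNReal.ofReal (|f x| ^ 2)),
      ← lintegral_const_mul' _ _ ENNReal.ofReal_ne_top]
    apply setLIntegral_mono' hΩ'm
    intro y hy
    have hgy : g y = f (ψ y) := Set.indicator_of_mem hy _
    rw [hgy]
    exact mul_le_mul_left (ENNReal.ofReal_le_ofReal (hjac y hy)) _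
  have step2 : ∫⁻ y in Ω', ENNReal.ofReal (‖fderiv ℝ g y‖ ^ 2) ≤
      ENNReal.ofReal K * ∫⁻ x in Ω, ENNReal.ofReal (‖fderiv ℝ f x‖ ^ 2) := by
    rw [cov (fun x => ENNReal.ofReal (‖fderiv ℝ f x‖ ^ 2)),
      ← lintegral_const_mul' _ _ ENNReal.ofReal_ne_top]
    apply setLIntegral_mono' hΩ'm
    intro y hy
    rw [← ENNReal.ofReal_mul (abs_nonneg _),
      ← ENNReal.ofReal_mul (by linarith : (0:ℝ) ≤ K)]
    apply ENNReal.ofReal_le_ofReal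
    have hnorm : ‖fderiv ℝ g y‖ ≤ ‖fderiv ℝ f (ψ y)‖ * ‖fderiv ℝ ψ y‖ := by
      rw [hfderivg y hy]; exact ContinuousLinearMap.opNorm_comp_le _ _
    calc ‖fderiv ℝ g y‖ ^ 2 ≤ (‖fderiv ℝ f (ψ y)‖ * ‖fderiv ℝ ψ y‖) ^ 2 :=
          pow_le_pow_left₀ (norm_nonneg _) hnorm 2
      _ = ‖fderiv ℝ ψ y‖ ^ 2 * ‖fderiv ℝ f (ψ y)‖ ^ 2 := by ring
      _ ≤ K * |LinearMap.det (fderiv ℝ ψ y).toLinearMap| *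
            ‖fderiv ℝ f (ψ y)‖ ^ 2 :=
          mul_le_mul_of_nonneg_right (hqc y hy) (by positivity)
      _ = K * (|LinearMap.det (fderiv ℝ ψ y).toLinearMap| *
            ‖fderiv ℝ f (ψ y)‖ ^ 2) := by ring
  calc ENNReal.ofReal lam * ∫⁻ x in Ω, ENNReal.ofReal (|f x| ^ 2)
      ≤ ENNReal.ofReal lam *
        (ENNReal.ofReal M * ∫⁻ y in Ω', ENNReal.ofReal (|g y| ^ 2)) :=
        mul_le_mul_right step1 _
    _ = ENNReal.ofReal M *
        (ENNReal.ofReal lam * ∫⁻ y in Ω', ENNReal.ofReal (|g y| ^ 2)) := by ring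
    _ ≤ ENNReal.ofReal M * ∫⁻ y in Ω', ENNReal.ofReal (‖fderiv ℝ g y‖ ^ 2) :=
        mul_le_mul_right (hpoincare g hdg hgcomp hgsub) _
    _ ≤ ENNReal.ofReal M *
        (ENNReal.ofReal K * ∫⁻ x in Ω, ENNReal.ofReal (‖fderiv ℝ f x‖ ^ 2)) :=
        mul_le_mul_right step2 _
    _ = ENNReal.ofReal K * ENNReal.ofReal M *
        ∫⁻ x in Ω, ENNReal.ofReal (‖fderiv ℝ f x‖ ^ 2) := by ring
end

section
/- For a nonempty open set U ⊆ ℂ define λ₁(U) ∈ [0,∞] as the infimum, over all f : ℂ → ℝ that are differentiable at every point of ℂ, have topological support a compact subset of U, and satisfy 0 < ∫⁻ |f|² < ∞, of the Rayleigh quotient (∫⁻_{U} ‖Df(x)‖² dx) / (∫⁻_{U} |f(x)|² dx). Let Ω, Ω' ⊆ ℂ be nonempty open sets with Ω ⊆ Ω', let ψ : ℂ → ℂ restrict to a homeomorphism from Ω' onto Ω that is differentiable at every point of Ω', and let K ≥ 1 and M > 0 be real numbers with K·M ≤ 1 such that ‖Dψ(y)‖² ≤ K·|det Dψ(y)| and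 |det Dψ(y)| ≤ M for every y ∈ Ω'. Then λ₁(Ω) − λ₁(Ω') ≥ ((1 − K·M)/(K·M)) · λ₁(Ω'), where the subtraction is truncated subtraction in [0,∞]. -/
open MeasureTheory ENNReal Metric Set

/-- The principal Dirichlet-Laplacian eigenvalue of a nonempty open set
`U ⊆ ℂ`, defined as the infimum of Rayleigh quotients over everywhere
differentiable test functions with compact topological support in `U` and
with `0 < ∫⁻ |f|² < ∞`. -/
noncomputable def firstDirichletEigenvalue (U : Set ℂ) : ℝ≥0∞ :=
  ⨅ (f : ℂ → ℝ) (_ : ∀ z, DifferentiableAt ℝ f z)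
    (_ : IsCompact (tsupport f)) (_ : tsupport f ⊆ U)
    (_ : 0 < ∫⁻ x, ENNReal.ofReal (|f x| ^ 2))
    (_ : (∫⁻ x, ENNReal.ofReal (|f x| ^ 2)) < ⊤),
    (∫⁻ x in U, ENNReal.ofReal (‖fderiv ℝ f x‖ ^ 2)) /
      ∫⁻ x in U, ENNReal.ofReal (|f x| ^ 2)

private lemma eigen_lt_top (U : Set ℂ) (hU : IsOpen U) (hUne : U.Nonempty) :
    firstDirichletEigenvalue U < ⊤ := by
  obtain ⟨z₀, hz₀⟩ := hUne
  obtain ⟨r, hr, hball⟩ := Metric.isOpen_iff.1 hU z₀ hz₀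
  have hcb : closedBall z₀ (r / 2) ⊆ U :=
    (closedBall_subset_ball (by linarith)).trans hball
  set φ : ContDiffBump z₀ := ⟨r / 4, r / 2, by linarith, by linarith⟩ with hφ
  have hdiff : ∀ z, DifferentiableAt ℝ (⇑φ) z :=
    fun z => (φ.contDiff (n := 1)).differentiable (by simp) |>.differentiableAt
  have hts : tsupport (⇑φ) = closedBall z₀ (r / 2) := φ.tsupport_eq
  have htc : IsCompact (tsupport (⇑φ)) := hts ▸ isCompact_closedBall _ _
  have htsub : tsupport (⇑φ) ⊆ U := hts ▸ hcb
  -- lower bound on the L² mass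
  have hlow : volume (closedBall z₀ (r / 4)) ≤ ∫⁻ x in U, ENNReal.ofReal (|φ x| ^ 2) := by
    calc volume (closedBall z₀ (r / 4))
        = ∫⁻ _ in closedBall z₀ (r / 4), (1 : ℝ≥0∞) := (setLIntegral_one _).symm
      _ ≤ ∫⁻ x in closedBall z₀ (r / 4), ENNReal.ofReal (|φ x| ^ 2) := by
          refine lintegral_mono_ae (ae_restrict_of_forall_mem measurableSet_closedBall ?_)
          intro x hx
          have h1 : φ x = 1 := φ.one_of_mem_closedBall (by simpa [hφ] using hx)
          simp [h1]
      _ ≤ ∫⁻ x in U, ENNReal.ofReal (|φ x| ^ 2) := by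
          refine lintegral_mono_set ((closedBall_subset_closedBall (by linarith)).trans hcb)
  have hposmass : (0:ℝ≥0∞) < volume (closedBall z₀ (r / 4)) :=
    measure_closedBall_pos volume z₀ (by linarith)
  -- upper bound on L² mass globally
  have hboundsq : ∀ x, ENNReal.ofReal (|φ x| ^ 2)
      ≤ (closedBall z₀ (r/2)).indicator (fun _ => (1:ℝ≥0∞)) x := by
    intro x
    by_cases hx : x ∈ closedBall z₀ (r/2)
    · rw [Set.indicator_of_mem hx]
      have := φ.le_one (x := x); have := φ.nonneg (x := x)
      refine (ENNReal.ofReal_le_one).2 ?_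
      rw [abs_of_nonneg ‹0 ≤ φ x›]
      nlinarith
    · rw [Set.indicator_of_notMem hx]
      have : φ x = 0 := image_eq_zero_of_notMem_tsupport (by rw [hts]; exact hx)
      simp [this]
  have hfin : (∫⁻ x, ENNReal.ofReal (|φ x| ^ 2)) < ⊤ := by
    calc (∫⁻ x, ENNReal.ofReal (|φ x| ^ 2))
        ≤ ∫⁻ x, (closedBall z₀ (r/2)).indicator (fun _ => (1:ℝ≥0∞)) x :=
          lintegral_mono hboundsq
      _ = volume (closedBall z₀ (r/2)) := by
          rw [lintegral_indicator measurableSet_closedBall]; simp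
      _ < ⊤ := measure_closedBall_lt_top
  have hpos : 0 < ∫⁻ x, ENNReal.ofReal (|φ x| ^ 2) :=
    lt_of_lt_of_le (lt_of_lt_of_le hposmass hlow) (setLIntegral_le_lintegral _ _)
  -- numerator finite
  obtain ⟨C, hC⟩ := (φ.hasCompactSupport.fderiv (𝕜 := ℝ)).exists_bound_of_continuous
    ((φ.contDiff (n := 1)).continuous_fderiv (by simp))
  have hC0 : 0 ≤ C := le_trans (norm_nonneg _) (hC z₀)
  have hNbound : ∀ x, ENNReal.ofReal (‖fderiv ℝ (⇑φ) x‖ ^ 2)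
      ≤ (closedBall z₀ (r/2)).indicator (fun _ => ENNReal.ofReal (C^2)) x := by
    intro x
    by_cases hx : x ∈ closedBall z₀ (r/2)
    · rw [Set.indicator_of_mem hx]
      exact ENNReal.ofReal_le_ofReal (by nlinarith [hC x, norm_nonneg (fderiv ℝ (⇑φ) x)])
    · rw [Set.indicator_of_notMem hx]
      have hxn : x ∉ tsupport (⇑φ) := by rw [hts]; exact hx
      have : fderiv ℝ (⇑φ) x = 0 := by
        by_contra h
        exact hxn (support_fderiv_subset ℝ (by simpa [Function.mem_support] using h))
      simp [this]
  have hNfin : (∫⁻ x in U, ENNReal.ofReal (‖fderiv ℝ (⇑φ) x‖ ^ 2)) < ⊤ := by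
    calc (∫⁻ x in U, ENNReal.ofReal (‖fderiv ℝ (⇑φ) x‖ ^ 2))
        ≤ ∫⁻ x, ENNReal.ofReal (‖fderiv ℝ (⇑φ) x‖ ^ 2) := setLIntegral_le_lintegral _ _
      _ ≤ ∫⁻ x, (closedBall z₀ (r/2)).indicator (fun _ => ENNReal.ofReal (C^2)) x :=
          lintegral_mono hNbound
      _ = ENNReal.ofReal (C^2) * volume (closedBall z₀ (r/2)) := by
          rw [lintegral_indicator measurableSet_closedBall]; simp [mul_comm]
      _ < ⊤ := ENNReal.mul_lt_top ENNReal.ofReal_lt_top measure_closedBall_lt_top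
  have hDpos : 0 < ∫⁻ x in U, ENNReal.ofReal (|φ x| ^ 2) := lt_of_lt_of_le hposmass hlow
  have hle : firstDirichletEigenvalue U ≤
      (∫⁻ x in U, ENNReal.ofReal (‖fderiv ℝ (⇑φ) x‖ ^ 2)) /
        ∫⁻ x in U, ENNReal.ofReal (|φ x| ^ 2) := by
    refine iInf_le_of_le (⇑φ) (iInf_le_of_le hdiff (iInf_le_of_le htc
      (iInf_le_of_le htsub (iInf_le_of_le hpos (iInf_le _ hfin)))))
  exact lt_of_le_of_lt hle (ENNReal.div_lt_top hNfin.ne hDpos.ne')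

private lemma eigen_le (Ω Ω' : Set ℂ) (hΩ : IsOpen Ω) (hΩ' : IsOpen Ω')
    (ψ : ℂ → ℂ) (e : ↥Ω' ≃ₜ ↥Ω) (he : ∀ y : ↥Ω', (e y : ℂ) = ψ y)
    (hdψ : ∀ y ∈ Ω', DifferentiableAt ℝ ψ y)
    (K M : ℝ) (hK : 1 ≤ K) (hM : 0 < M)
    (hqc : ∀ y ∈ Ω',
      ‖fderiv ℝ ψ y‖ ^ 2 ≤ K * |LinearMap.det (fderiv ℝ ψ y).toLinearMap|)
    (hjac : ∀ y ∈ Ω', |LinearMap.det (fderiv ℝ ψ y).toLinearMap| ≤ M) :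
    firstDirichletEigenvalue Ω' ≤
      ENNReal.ofReal (K * M) * firstDirichletEigenvalue Ω := by
  have hK0 : (0:ℝ) < K := lt_of_lt_of_le one_pos hK
  -- basic facts about ψ
  have hψmap : ∀ y ∈ Ω', ψ y ∈ Ω := fun y hy => by
    have := (e ⟨y, hy⟩).2; rwa [he ⟨y, hy⟩] at this
  have himg : ψ '' Ω' = Ω := by
    apply Set.Subset.antisymm
    · rintro x ⟨y, hy, rfl⟩; exact hψmap y hy
    · intro x hx
      refine ⟨(e.symm ⟨x, hx⟩ : ℂ), (e.symm ⟨x, hx⟩).2, ?_⟩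
      have := he (e.symm ⟨x, hx⟩)
      rw [e.apply_symm_apply] at this
      exact this.symm
  have hinj : Set.InjOn ψ Ω' := by
    intro y₁ h₁ y₂ h₂ hψeq
    have : e ⟨y₁, h₁⟩ = e ⟨y₂, h₂⟩ := Subtype.ext (by rw [he, he]; exact hψeq)
    exact congrArg Subtype.val (e.injective this)
  -- change of variables
  have cov : ∀ G : ℂ → ℝ≥0∞, ∫⁻ x in Ω, G x =
      ∫⁻ y in Ω', ENNReal.ofReal |LinearMap.det (fderiv ℝ ψ y).toLinearMap| * G (ψ y) := by
    intro G
    rw [← himg]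
    exact lintegral_image_eq_lintegral_abs_det_fderiv_mul volume hΩ'.measurableSet
      (fun x hx => ((hdψ x hx).hasFDerivAt).hasFDerivWithinAt) hinj G
  -- now compare with the infimum over test functions for Ω
  rw [show ENNReal.ofReal (K*M) * firstDirichletEigenvalue Ω =
      ⨅ (f : ℂ → ℝ) (_ : ∀ z, DifferentiableAt ℝ f z)
        (_ : IsCompact (tsupport f)) (_ : tsupport f ⊆ Ω)
        (_ : 0 < ∫⁻ x, ENNReal.ofReal (|f x| ^ 2))
        (_ : (∫⁻ x, ENNReal.ofReal (|f x| ^ 2)) < ⊤),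
        ENNReal.ofReal (K*M) *
        ((∫⁻ x in Ω, ENNReal.ofReal (‖fderiv ℝ f x‖ ^ 2)) /
          ∫⁻ x in Ω, ENNReal.ofReal (|f x| ^ 2)) from by
    rw [firstDirichletEigenvalue]
    have h0 : ENNReal.ofReal (K*M) ≠ 0 := by
      simp [ENNReal.ofReal_eq_zero, not_le]; positivity
    have ht : ENNReal.ofReal (K*M) ≠ ⊤ := ENNReal.ofReal_ne_top
    rw [ENNReal.mul_iInf_of_ne h0 ht]
    congr 1; ext f
    rw [ENNReal.mul_iInf_of_ne h0 ht]; congr 1; ext h1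
    rw [ENNReal.mul_iInf_of_ne h0 ht]; congr 1; ext h2
    rw [ENNReal.mul_iInf_of_ne h0 ht]; congr 1; ext h3
    rw [ENNReal.mul_iInf_of_ne h0 ht]; congr 1; ext h4
    rw [ENNReal.mul_iInf_of_ne h0 ht]]
  refine le_iInf fun f => le_iInf fun hdf => le_iInf fun hcs => le_iInf fun hsupp =>
    le_iInf fun hpos => le_iInf fun hfin => ?_
  classical
  set S : Set ℂ := tsupport f with hS
  set g : ℂ → ℝ := Ω'.indicator (fun y => f (ψ y)) with hg
  -- the compact set T
  set S' : Set ↥Ω := (Subtype.val) ⁻¹' S with hS'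
  have hS'c : IsCompact S' := by
    rw [Subtype.isCompact_iff]
    have : Subtype.val '' S' = S := by
      rw [hS', Set.image_preimage_eq_inter_range, Subtype.range_coe]
      exact Set.inter_eq_left.2 hsupp
    rw [this]; exact hcs
  set T : Set ℂ := Subtype.val '' (⇑e ⁻¹' S') with hT
  have hTc : IsCompact T := by
    rw [hT]
    exact (e.isCompact_preimage.2 hS'c).image continuous_subtype_val
  have hTsub : T ⊆ Ω' := by rintro x ⟨y, _, rfl⟩; exact y.2
  -- support of g
  have hgsupp : Function.support g ⊆ T := by
    intro y hy
    rw [Function.mem_support, hg] at hy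
    by_cases hyΩ : y ∈ Ω'
    · rw [Set.indicator_of_mem hyΩ] at hy
      have hψy : ψ y ∈ S :=
        subset_tsupport f (Function.mem_support.2 hy)
      refine ⟨⟨y, hyΩ⟩, ?_, rfl⟩
      show e ⟨y, hyΩ⟩ ∈ S'
      show (e ⟨y, hyΩ⟩ : ℂ) ∈ S
      rw [he ⟨y, hyΩ⟩]; exact hψy
    · rw [Set.indicator_of_notMem hyΩ] at hy; exact absurd rfl hy
  have htsg : tsupport g ⊆ T := closure_minimal hgsupp hTc.isClosed
  have hgcs : IsCompact (tsupport g) := hTc.of_isClosed_subset isClosed_closure htsg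
  have htsub' : tsupport g ⊆ Ω' := htsg.trans hTsub
  have hgeq : ∀ y ∈ Ω', g y = f (ψ y) := fun y hy => Set.indicator_of_mem hy _
  -- differentiability of g
  have hgev : ∀ y ∈ Ω', g =ᶠ[nhds y] fun x => f (ψ x) := fun y hy =>
    Filter.eventually_of_mem (hΩ'.mem_nhds hy) (fun x hx => Set.indicator_of_mem hx _)
  have hdg : ∀ z, DifferentiableAt ℝ g z := by
    intro z
    by_cases hz : z ∈ Ω'
    · exact ((hdf (ψ z)).comp z (hdψ z hz)).congr_of_eventuallyEq (hgev z hz)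
    · have hzT : z ∈ Tᶜ := fun h => hz (hTsub h)
      have : g =ᶠ[nhds z] fun _ => (0:ℝ) :=
        Filter.eventually_of_mem (hTc.isClosed.isOpen_compl.mem_nhds hzT)
          (fun x hx => by
            by_contra h
            exact hx (hgsupp (Function.mem_support.2 h)))
      exact (differentiableAt_const 0).congr_of_eventuallyEq this
  have hfd : ∀ y ∈ Ω',
      fderiv ℝ g y = (fderiv ℝ f (ψ y)).comp (fderiv ℝ ψ y) := by
    intro y hy
    rw [(hgev y hy).fderiv_eq]
    exact fderiv_comp y (hdf (ψ y)) (hdψ y hy)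
  -- abbreviations
  set Nf := ∫⁻ x in Ω, ENNReal.ofReal (‖fderiv ℝ f x‖ ^ 2) with hNf
  set Df := ∫⁻ x in Ω, ENNReal.ofReal (|f x| ^ 2) with hDf
  set Ng := ∫⁻ y in Ω', ENNReal.ofReal (‖fderiv ℝ g y‖ ^ 2) with hNg
  set Dg := ∫⁻ y in Ω', ENNReal.ofReal (|g y| ^ 2) with hDg
  -- numerator estimate
  have hNum : Ng ≤ ENNReal.ofReal K * Nf := by
    have step1 : Ng ≤ ∫⁻ y in Ω', ENNReal.ofReal K *
        (ENNReal.ofReal |LinearMap.det (fderiv ℝ ψ y).toLinearMap| *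
          ENNReal.ofReal (‖fderiv ℝ f (ψ y)‖ ^ 2)) := by
      refine lintegral_mono_ae (ae_restrict_of_forall_mem hΩ'.measurableSet ?_)
      intro y hy
      have h1 : ‖fderiv ℝ g y‖ ^ 2 ≤ K *
          (|LinearMap.det (fderiv ℝ ψ y).toLinearMap| * ‖fderiv ℝ f (ψ y)‖ ^ 2) := by
        rw [hfd y hy]
        have h2 : ‖(fderiv ℝ f (ψ y)).comp (fderiv ℝ ψ y)‖ ≤
            ‖fderiv ℝ f (ψ y)‖ * ‖fderiv ℝ ψ y‖ := ContinuousLinearMap.opNorm_comp_le _ _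
        have h3 := hqc y hy
        nlinarith [norm_nonneg ((fderiv ℝ f (ψ y)).comp (fderiv ℝ ψ y)),
          norm_nonneg (fderiv ℝ f (ψ y)), norm_nonneg (fderiv ℝ ψ y),
          sq_nonneg (‖fderiv ℝ f (ψ y)‖), abs_nonneg (LinearMap.det (fderiv ℝ ψ y).toLinearMap)]
      calc ENNReal.ofReal (‖fderiv ℝ g y‖ ^ 2)
          ≤ ENNReal.ofReal (K * (|LinearMap.det (fderiv ℝ ψ y).toLinearMap| *
              ‖fderiv ℝ f (ψ y)‖ ^ 2)) := ENNReal.ofReal_le_ofReal h1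
        _ = _ := by
            rw [ENNReal.ofReal_mul hK0.le, ENNReal.ofReal_mul (abs_nonneg _)]
    calc Ng ≤ _ := step1
      _ = ENNReal.ofReal K * ∫⁻ y in Ω',
            ENNReal.ofReal |LinearMap.det (fderiv ℝ ψ y).toLinearMap| *
              ENNReal.ofReal (‖fderiv ℝ f (ψ y)‖ ^ 2) :=
          lintegral_const_mul' _ _ ENNReal.ofReal_ne_top
      _ = ENNReal.ofReal K * Nf := by
          rw [hNf, cov (fun x => ENNReal.ofReal (‖fderiv ℝ f x‖ ^ 2))]
  -- denominator estimate
  have hDen : Df ≤ ENNReal.ofReal M * Dg := by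
    calc Df = ∫⁻ y in Ω',
          ENNReal.ofReal |LinearMap.det (fderiv ℝ ψ y).toLinearMap| *
            ENNReal.ofReal (|f (ψ y)| ^ 2) := by
          rw [hDf, cov (fun x => ENNReal.ofReal (|f x| ^ 2))]
      _ ≤ ∫⁻ y in Ω', ENNReal.ofReal M * ENNReal.ofReal (|g y| ^ 2) := by
          refine lintegral_mono_ae (ae_restrict_of_forall_mem hΩ'.measurableSet ?_)
          intro y hy
          rw [hgeq y hy]
          exact mul_le_mul' (ENNReal.ofReal_le_ofReal (hjac y hy)) le_rfl
      _ = ENNReal.ofReal M * Dg := lintegral_const_mul' _ _ ENNReal.ofReal_ne_top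
  -- positivity of f-mass on Ω
  have hDfglobal : Df = ∫⁻ x, ENNReal.ofReal (|f x| ^ 2) := by
    rw [hDf]
    refine setLIntegral_eq_of_support_subset ?_
    intro x hx
    rw [Function.mem_support] at hx
    have : f x ≠ 0 := by
      intro h; rw [h] at hx; simp at hx
    exact hsupp (subset_tsupport f (Function.mem_support.2 this))
  have hDfpos : 0 < Df := hDfglobal ▸ hpos
  have hDffin : Df < ⊤ := hDfglobal ▸ hfin
  -- g has positive mass
  have hDgpos : 0 < Dg := by
    rcases eq_or_lt_of_le (zero_le : 0 ≤ Dg) with h | h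
    · exfalso
      have : Df ≤ 0 := by
        calc Df ≤ ENNReal.ofReal M * Dg := hDen
          _ = 0 := by rw [← h, mul_zero]
      exact absurd (le_antisymm this zero_le) hDfpos.ne'
    · exact h
  have hgpos : 0 < ∫⁻ x, ENNReal.ofReal (|g x| ^ 2) :=
    lt_of_lt_of_le hDgpos (setLIntegral_le_lintegral _ _)
  -- g has finite mass
  have hfcont : Continuous f := continuous_iff_continuousAt.2 fun x => (hdf x).continuousAt
  have hcsf : HasCompactSupport f := hcs
  obtain ⟨C, hC⟩ := hcsf.exists_bound_of_continuous hfcont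
  have hC' : ∀ x, |f x| ≤ C := fun x => by simpa using hC x
  have hC0 : 0 ≤ C := le_trans (abs_nonneg _) (hC' 0)
  have hgbound : ∀ x, |g x| ≤ C := by
    intro x
    rw [hg]
    by_cases hx : x ∈ Ω'
    · rw [Set.indicator_of_mem hx]; exact hC' _
    · rw [Set.indicator_of_notMem hx]; simpa using hC0
  have hgfin : (∫⁻ x, ENNReal.ofReal (|g x| ^ 2)) < ⊤ := by
    calc (∫⁻ x, ENNReal.ofReal (|g x| ^ 2))
        ≤ ∫⁻ x, T.indicator (fun _ => ENNReal.ofReal (C ^ 2)) x := by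
          refine lintegral_mono fun x => ?_
          by_cases hx : x ∈ T
          · rw [Set.indicator_of_mem hx]
            exact ENNReal.ofReal_le_ofReal (by nlinarith [hgbound x, abs_nonneg (g x)])
          · rw [Set.indicator_of_notMem hx]
            have : g x = 0 := by
              by_contra h
              exact hx (hgsupp (Function.mem_support.2 h))
            simp [this]
      _ = ENNReal.ofReal (C ^ 2) * volume T := by
          rw [lintegral_indicator hTc.measurableSet]; simp [mul_comm]
      _ < ⊤ := ENNReal.mul_lt_top ENNReal.ofReal_lt_top hTc.measure_lt_top
  -- conclusion
  have hfirst : firstDirichletEigenvalue Ω' ≤ Ng / Dg :=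
    iInf_le_of_le g (iInf_le_of_le hdg (iInf_le_of_le hgcs
      (iInf_le_of_le htsub' (iInf_le_of_le hgpos (iInf_le _ hgfin)))))
  refine hfirst.trans ?_
  have hMne0 : ENNReal.ofReal M ≠ 0 := by
    simp [ENNReal.ofReal_eq_zero, not_le]; positivity
  have hMnetop : ENNReal.ofReal M ≠ ⊤ := ENNReal.ofReal_ne_top
  have hDen' : (ENNReal.ofReal M)⁻¹ * Df ≤ Dg := by
    calc (ENNReal.ofReal M)⁻¹ * Df ≤ (ENNReal.ofReal M)⁻¹ * (ENNReal.ofReal M * Dg) :=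
        mul_le_mul' le_rfl hDen
      _ = Dg := by rw [← mul_assoc, ENNReal.inv_mul_cancel hMne0 hMnetop, one_mul]
  calc Ng / Dg ≤ (ENNReal.ofReal K * Nf) / ((ENNReal.ofReal M)⁻¹ * Df) :=
      ENNReal.div_le_div hNum hDen'
    _ = ENNReal.ofReal (K * M) * (Nf / Df) := by
        rw [ENNReal.ofReal_mul hK0.le, div_eq_mul_inv, div_eq_mul_inv,
          ENNReal.mul_inv (Or.inl (by simp [hMnetop])) (Or.inl (by simp [hMne0])),
          inv_inv]
        ring

/-- Growth monotonicity estimate for the principal Dirichlet-Laplacian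
eigenvalue (Theorem 7 of the paper): if `Ω ⊆ Ω'` and `ψ` restricts to a
homeomorphism from `Ω'` onto `Ω`, differentiable on `Ω'`, which is
`K`-quasiconformal with Jacobian bounded by `M` and `K·M ≤ 1`, then
`λ₁(Ω) − λ₁(Ω') ≥ ((1 − K·M)/(K·M))·λ₁(Ω')`. -/
theorem principal_eigenvalue_growth_monotonicity
    (Ω Ω' : Set ℂ) (hΩ : IsOpen Ω) (hΩ' : IsOpen Ω')
    (hΩne : Ω.Nonempty) (hΩ'ne : Ω'.Nonempty) (hsub : Ω ⊆ Ω')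
    (ψ : ℂ → ℂ) (e : ↥Ω' ≃ₜ ↥Ω) (he : ∀ y : ↥Ω', (e y : ℂ) = ψ y)
    (hdψ : ∀ y ∈ Ω', DifferentiableAt ℝ ψ y)
    (K M : ℝ) (hK : 1 ≤ K) (hM : 0 < M) (hKM : K * M ≤ 1)
    (hqc : ∀ y ∈ Ω',
      ‖fderiv ℝ ψ y‖ ^ 2 ≤ K * |LinearMap.det (fderiv ℝ ψ y).toLinearMap|)
    (hjac : ∀ y ∈ Ω', |LinearMap.det (fderiv ℝ ψ y).toLinearMap| ≤ M) :
    firstDirichletEigenvalue Ω - firstDirichletEigenvalue Ω' ≥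
      ENNReal.ofReal ((1 - K * M) / (K * M)) * firstDirichletEigenvalue Ω' := by
  have hKM0 : (0:ℝ) < K * M := mul_pos (lt_of_lt_of_le one_pos hK) hM
  have hb : firstDirichletEigenvalue Ω' < ⊤ := eigen_lt_top Ω' hΩ' hΩ'ne
  have hmain : firstDirichletEigenvalue Ω' ≤
      ENNReal.ofReal (K * M) * firstDirichletEigenvalue Ω :=
    eigen_le Ω Ω' hΩ hΩ' ψ e he hdψ K M hK hM hqc hjac
  set a := firstDirichletEigenvalue Ω
  set b := firstDirichletEigenvalue Ω'
  have hc0 : (0:ℝ) ≤ (1 - K * M) / (K * M) := by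
    apply div_nonneg (by linarith) hKM0.le
  refine ENNReal.le_sub_of_add_le_right hb.ne ?_
  have key : ENNReal.ofReal ((1 - K * M) / (K * M)) * b + b =
      ENNReal.ofReal (1 / (K * M)) * b := by
    have h1 : ENNReal.ofReal ((1 - K * M) / (K * M)) + 1 =
        ENNReal.ofReal (1 / (K * M)) := by
      rw [← ENNReal.ofReal_one, ← ENNReal.ofReal_add hc0 zero_le_one]
      congr 1
      field_simp
      ring
    calc ENNReal.ofReal ((1 - K * M) / (K * M)) * b + b
        = (ENNReal.ofReal ((1 - K * M) / (K * M)) + 1) * b := by rw [add_mul, one_mul]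
      _ = ENNReal.ofReal (1 / (K * M)) * b := by rw [h1]
  rw [key]
  have hKMne0 : ENNReal.ofReal (K * M) ≠ 0 := by
    simp [ENNReal.ofReal_eq_zero, not_le]; positivity
  have hKMnetop : ENNReal.ofReal (K * M) ≠ ⊤ := ENNReal.ofReal_ne_top
  have h2 : ENNReal.ofReal (1 / (K * M)) = (ENNReal.ofReal (K * M))⁻¹ := by
    rw [one_div, ENNReal.ofReal_inv_of_pos hKM0]
  rw [h2]
  calc (ENNReal.ofReal (K * M))⁻¹ * b
      ≤ (ENNReal.ofReal (K * M))⁻¹ * (ENNReal.ofReal (K * M) * a) :=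
        mul_le_mul' le_rfl hmain
    _ = a := by rw [← mul_assoc, ENNReal.inv_mul_cancel hKMne0 hKMnetop, one_mul]
end

section
/- Let Ω, Ω' ⊆ ℂ be open sets, let η : ℂ → ℂ be injective on Ω' with η(Ω') = Ω and differentiable at every point of Ω', and let 1 ≤ s < r < ∞. Then for every measurable g : ℂ → ℝ one has (∫⁻_{Ω} |g(x)|^s dx)^{1/s} ≤ (∫⁻_{Ω'} |det Dη(y)|^{r/(r−s)} dy)^{(r−s)/(rs)} · (∫⁻_{Ω'} |g(η(y))|^r dy)^{1/r}, where all integrals are Lebesgue integrals with values in [0,∞]. -/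
open MeasureTheory ENNReal

/-- The case `1 ≤ s < r` of Theorem 1 (sufficiency): if `η = φ⁻¹` is injective
on `Ω'` with `η(Ω') = Ω` and differentiable on `Ω'`, then
`(∫⁻_Ω |g|^s)^{1/s} ≤ (∫⁻_{Ω'} |det Dη|^{r/(r−s)})^{(r−s)/(rs)} ·
(∫⁻_{Ω'} |g ∘ η|^r)^{1/r}` for every measurable `g`. -/
theorem composition_operator_bound_distinct_exponents
    (Ω Ω' : Set ℂ) (hΩ : IsOpen Ω) (hΩ' : IsOpen Ω')
    (η : ℂ → ℂ) (hinj : Set.InjOn η Ω') (himg : η '' Ω' = Ω)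
    (hdη : ∀ y ∈ Ω', DifferentiableAt ℝ η y)
    (s r : ℝ) (hs : 1 ≤ s) (hsr : s < r)
    (g : ℂ → ℝ) (hg : Measurable g) :
    (∫⁻ x in Ω, ENNReal.ofReal (|g x| ^ s)) ^ (1 / s) ≤
      (∫⁻ y in Ω', ENNReal.ofReal
          (|LinearMap.det (fderiv ℝ η y).toLinearMap| ^ (r / (r - s)))) ^
        ((r - s) / (r * s)) *
      (∫⁻ y in Ω', ENNReal.ofReal (|g (η y)| ^ r)) ^ (1 / r) := by
  have hs0 : (0:ℝ) < s := lt_of_lt_of_le one_pos hs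
  have hr0 : (0:ℝ) < r := hs0.trans hsr
  have hrs : (0:ℝ) < r - s := sub_pos.mpr hsr
  -- change of variables
  have hder : ∀ y ∈ Ω', HasFDerivWithinAt η (fderiv ℝ η y) Ω' y :=
    fun y hy => (hdη y hy).hasFDerivAt.hasFDerivWithinAt
  have hcov := lintegral_image_eq_lintegral_abs_det_fderiv_mul volume
    hΩ'.measurableSet hder hinj (fun x => ENNReal.ofReal (|g x| ^ s))
  rw [himg] at hcov
  rw [hcov]
  -- measurability
  have hηc : ContinuousOn η Ω' := fun y hy => (hdη y hy).continuousAt.continuousWithinAt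
  have hηm : AEMeasurable η (volume.restrict Ω') := hηc.aemeasurable hΩ'.measurableSet
  have hJ : AEMeasurable (fun y => ENNReal.ofReal |(fderiv ℝ η y).det|)
      (volume.restrict Ω') :=
    (ENNReal.measurable_ofReal.comp ((measurable_norm.comp
      (ContinuousLinearMap.continuous_det.measurable.comp (measurable_fderiv ℝ η))))).aemeasurable
  have hG : AEMeasurable (fun y => ENNReal.ofReal (|g (η y)| ^ s)) (volume.restrict Ω') :=
    ENNReal.measurable_ofReal.comp_aemeasurable
      (((hg.comp_aemeasurable hηm).norm).pow_const s)
  -- Hölder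
  have hrne : r ≠ 0 := hr0.ne'
  have hsne : s ≠ 0 := hs0.ne'
  have hrsne : r - s ≠ 0 := hrs.ne'
  have hpq : Real.HolderConjugate (r / (r - s)) (r / s) := by
    rw [Real.holderConjugate_iff]
    constructor
    · rw [lt_div_iff₀ hrs]; linarith
    · field_simp <;> ring
  have hHolder := ENNReal.lintegral_mul_le_Lp_mul_Lq (volume.restrict Ω') hpq hJ hG
  -- identify the integrands
  have e1 : ∀ y, (ENNReal.ofReal |(fderiv ℝ η y).det|) ^ (r / (r - s)) =
      ENNReal.ofReal (|LinearMap.det (fderiv ℝ η y).toLinearMap| ^ (r / (r - s))) := by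
    intro y
    rw [ENNReal.ofReal_rpow_of_nonneg (abs_nonneg _) (by positivity)]
  have e2 : ∀ y, (ENNReal.ofReal (|g (η y)| ^ s)) ^ (r / s) =
      ENNReal.ofReal (|g (η y)| ^ r) := by
    intro y
    rw [ENNReal.ofReal_rpow_of_nonneg (by positivity) (by positivity),
      ← Real.rpow_mul (abs_nonneg _)]
    congr 1
    field_simp
  simp only [Pi.mul_apply, e1, e2] at hHolder
  calc (∫⁻ y in Ω', ENNReal.ofReal |(fderiv ℝ η y).det|
          * ENNReal.ofReal (|g (η y)| ^ s)) ^ (1 / s)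
      ≤ ((∫⁻ y in Ω', ENNReal.ofReal
          (|LinearMap.det (fderiv ℝ η y).toLinearMap| ^ (r / (r - s)))) ^ (1 / (r / (r - s)))
        * (∫⁻ y in Ω', ENNReal.ofReal (|g (η y)| ^ r)) ^ (1 / (r / s))) ^ (1 / s) := by
        exact ENNReal.rpow_le_rpow hHolder (by positivity)
    _ = _ := by
        rw [ENNReal.mul_rpow_of_nonneg _ _ (by positivity),
          ← ENNReal.rpow_mul, ← ENNReal.rpow_mul]
        congr 1
        · congr 1
          field_simp <;> ring
        · congr 1
          field_simp <;> ring
end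

section
/- For every real a with 0 ≤ a ≤ 1/8 and every real j with j ≥ 2.4048, one has ((√(a²+1)−a)/(√(a²+1)+a)) · j² > π²/(4·(√(a²+1)−a)²). -/
/-- For `0 ≤ a ≤ 1/8` and `j ≥ 2.4048` (in particular for `j = j_{0,1}`), the
quasiconformal lower bound `((√(a²+1)−a)/(√(a²+1)+a))·j²` for the first
Dirichlet eigenvalue of the ellipse with semi-axes `√(a²+1)±a` beats Hersch's
bound `π²/(4·(√(a²+1)−a)²)`. -/
theorem ellipse_bound_beats_hersch (a j : ℝ) (ha0 : 0 ≤ a) (ha : a ≤ 1 / 8)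
    (hj : 2.4048 ≤ j) :
    ((Real.sqrt (a ^ 2 + 1) - a) / (Real.sqrt (a ^ 2 + 1) + a)) * j ^ 2 >
      Real.pi ^ 2 / (4 * (Real.sqrt (a ^ 2 + 1) - a) ^ 2) := by
  set s := Real.sqrt (a ^ 2 + 1) with hs
  have hs2 : s ^ 2 = a ^ 2 + 1 := Real.sq_sqrt (by positivity)
  have hs1 : 1 ≤ s := by
    nlinarith [Real.sqrt_nonneg (a ^ 2 + 1), sq_nonneg a]
  have hsu : s ≤ 1.008 := by
    rw [hs, show (1.008 : ℝ) = Real.sqrt (1.008 ^ 2) from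
      (Real.sqrt_sq (by norm_num)).symm]
    exact Real.sqrt_le_sqrt (by nlinarith)
  have hpa : 0 < s + a := by linarith
  have hprod : (s - a) * (s + a) = 1 := by nlinarith
  have hma : 0 < s - a := by
    rcases lt_trichotomy (s - a) 0 with h | h | h
    · nlinarith
    · nlinarith
    · exact h
  have hsma : (0.88 : ℝ) ≤ s - a := by nlinarith
  have hdiv : (s - a) / (s + a) = (s - a) ^ 2 := by
    field_simp
    nlinarith
  rw [hdiv, gt_iff_lt, div_lt_iff₀ (by positivity)]
  have h1 : (0.77 : ℝ) ≤ (s - a) ^ 2 := by nlinarith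
  have h2 : (5.78 : ℝ) ≤ j ^ 2 := by nlinarith
  nlinarith [Real.pi_lt_d2, Real.pi_pos, mul_le_mul h1 h2 (by norm_num) (by positivity)]
end

section
/- Let a > 0 be a real number and define ψ : ℂ → ℂ by ψ(z) = a·(z+1)^{3/4}·(conj(z)+1)^{1/4}, using the principal branch of complex powers. Then for every z in the open unit disc {z ∈ ℂ : |z| < 1}, ψ is differentiable at z and the determinant of its real Fréchet derivative satisfies det Dψ(z) = a²/2. -/
open Complex

lemma det_aux (p q : ℂ) (L : ℂ →ₗ[ℝ] ℂ) (hL : ∀ v, L v = p * v + q * (starRingEnd ℂ) v) :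
    LinearMap.det L = normSq p - normSq q := by
  rw [← LinearMap.det_toMatrix Complex.basisOneI, Matrix.det_fin_two]
  simp only [LinearMap.toMatrix_apply, Complex.coe_basisOneI, Matrix.cons_val_zero,
    Matrix.cons_val_one, Matrix.head_cons, hL, Complex.coe_basisOneI_repr]
  simp [Complex.normSq_apply]
  ring


/-- The rose-petal map `ψ(z) = a·(z+1)^{3/4}·(conj(z)+1)^{1/4}` (principal
branch) is differentiable on the open unit disc with Jacobian
`det Dψ(z) = a²/2`. -/
theorem rose_petal_map_jacobian (a : ℝ) (ha : 0 < a)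
    (ψ : ℂ → ℂ)
    (hψ : ∀ z : ℂ, ψ z = (a : ℂ) * (z + 1) ^ ((3 : ℂ) / 4) *
      ((starRingEnd ℂ) z + 1) ^ ((1 : ℂ) / 4)) :
    ∀ z ∈ Metric.ball (0 : ℂ) 1,
      DifferentiableAt ℝ ψ z ∧
      LinearMap.det (fderiv ℝ ψ z).toLinearMap = a ^ 2 / 2 := by
  have hψ' : ψ = fun z => (a : ℂ) * (z + 1) ^ ((3 : ℂ) / 4) *
      ((starRingEnd ℂ) z + 1) ^ ((1 : ℂ) / 4) := funext hψ
  subst hψ'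
  intro z hz
  simp only [Metric.mem_ball, dist_zero_right] at hz
  have hre : -1 < z.re := by
    have := Complex.abs_re_le_norm z
    have := neg_abs_le z.re
    linarith
  have h1 : (z + 1) ∈ Complex.slitPlane := by
    rw [Complex.mem_slitPlane_iff]
    left; simpa using by linarith
  have h2 : ((starRingEnd ℂ) z + 1) ∈ Complex.slitPlane := by
    rw [Complex.mem_slitPlane_iff]
    left; simp only [Complex.add_re, Complex.conj_re, Complex.one_re]; linarith
  set f' : ℂ := (3 / 4) * (z + 1) ^ ((3 : ℂ) / 4 - 1) with hf'
  set g' : ℂ := (1 / 4) * ((starRingEnd ℂ) z + 1) ^ ((1 : ℂ) / 4 - 1) with hg'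
  have hF : HasDerivAt (fun w : ℂ => (w + 1) ^ ((3 : ℂ) / 4)) (f' * 1) z :=
    ((hasDerivAt_id z).add_const 1).cpow_const (by simpa using h1)
  have hG : HasDerivAt (fun w : ℂ => (w + 1) ^ ((1 : ℂ) / 4)) (g' * 1)
      ((starRingEnd ℂ) z) :=
    ((hasDerivAt_id _).add_const 1).cpow_const (by simpa using h2)
  have hconj : HasFDerivAt (fun w : ℂ => (starRingEnd ℂ) w)
      (Complex.conjCLE.toContinuousLinearMap : ℂ →L[ℝ] ℂ) z :=
    Complex.conjCLE.toContinuousLinearEquiv.hasFDerivAt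
  have hFr : HasFDerivAt (fun w : ℂ => (w + 1) ^ ((3 : ℂ) / 4))
      (((1 : ℂ →L[ℂ] ℂ).smulRight (f' * 1)).restrictScalars ℝ) z :=
    hF.hasFDerivAt.restrictScalars ℝ
  have hGr : HasFDerivAt (fun w : ℂ => ((starRingEnd ℂ) w + 1) ^ ((1 : ℂ) / 4))
      ((((1 : ℂ →L[ℂ] ℂ).smulRight (g' * 1)).restrictScalars ℝ).comp
        (Complex.conjCLE.toContinuousLinearMap : ℂ →L[ℝ] ℂ)) z :=
    (hG.hasFDerivAt.restrictScalars ℝ).comp z hconj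
  have hmul := (hFr.mul hGr).const_mul (a : ℂ)
  set F : ℂ := (z + 1) ^ ((3 : ℂ) / 4) with hFdef
  set G : ℂ := ((starRingEnd ℂ) z + 1) ^ ((1 : ℂ) / 4) with hGdef
  have hmul' : HasFDerivAt (fun z => (a : ℂ) * (z + 1) ^ ((3 : ℂ) / 4) *
      ((starRingEnd ℂ) z + 1) ^ ((1 : ℂ) / 4))
      ((a : ℂ) • (F • ((((1 : ℂ →L[ℂ] ℂ).smulRight (g' * 1)).restrictScalars ℝ).comp
          (Complex.conjCLE.toContinuousLinearMap : ℂ →L[ℝ] ℂ)) +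
        G • (((1 : ℂ →L[ℂ] ℂ).smulRight (f' * 1)).restrictScalars ℝ))) z := by
    refine hmul.congr_of_eventuallyEq (Filter.Eventually.of_forall fun w => ?_)
    simp only [Pi.mul_apply]; ring
  refine ⟨hmul'.differentiableAt, ?_⟩
  rw [hmul'.fderiv]
  set p : ℂ := (a : ℂ) * G * f'
  set q : ℂ := (a : ℂ) * F * g'
  rw [det_aux p q _ ?_]
  · have hz1 : (z + 1) ≠ 0 := Complex.slitPlane_ne_zero h1
    have hz2 : ((starRingEnd ℂ) z + 1) ≠ 0 := Complex.slitPlane_ne_zero h2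
    set r : ℝ := ‖z + 1‖ with hrdef
    have hr : 0 < r := norm_pos_iff.mpr hz1
    have hconjabs : ‖(starRingEnd ℂ) z + 1‖ = r := by
      rw [hrdef, ← Complex.norm_conj (z + 1)]; simp
    have habs1 : ∀ c : ℂ, ‖(z + 1) ^ c‖ = r ^ c.re / Real.exp ((z+1).arg * c.im) :=
      fun c => Complex.norm_cpow_of_ne_zero hz1 c
    have habs2 : ∀ c : ℂ, ‖((starRingEnd ℂ) z + 1) ^ c‖
        = r ^ c.re / Real.exp (((starRingEnd ℂ) z + 1).arg * c.im) := by
      intro c; rw [Complex.norm_cpow_of_ne_zero hz2 c, hconjabs]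
    have hp : ‖p‖ = a * (3 / 4) * (r ^ ((1:ℝ)/4) * r ^ (-(1:ℝ)/4)) := by
      simp only [p, hf', hFdef, hGdef, norm_mul]
      rw [habs1, habs2]
      norm_num [Complex.norm_real, abs_of_pos ha]
      ring
    have hq : ‖q‖ = a * (1 / 4) * (r ^ ((3:ℝ)/4) * r ^ (-(3:ℝ)/4)) := by
      simp only [q, hg', hFdef, hGdef, norm_mul]
      rw [habs1, habs2]
      norm_num [Complex.norm_real, abs_of_pos ha]
      ring
    have hcancel : ∀ x : ℝ, r ^ x * r ^ (-x) = 1 := by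
      intro x
      rw [← Real.rpow_add hr, add_neg_cancel, Real.rpow_zero]
    rw [← Complex.sq_norm, ← Complex.sq_norm, hp, hq]
    have e1 := hcancel ((1:ℝ)/4)
    have e2 := hcancel ((3:ℝ)/4)
    rw [show -(1:ℝ)/4 = -((1:ℝ)/4) by ring] at *
    rw [show -(3:ℝ)/4 = -((3:ℝ)/4) by ring] at *
    rw [e1, e2]
    ring
  · intro v
    simp [p, q, ContinuousLinearMap.smul_apply, mul_comm, F, G]
    ring
end

section
/- Let a > 0 be a real number and define ψ : ℂ → ℂ by ψ(z) = a·(z+1)^{3/4}·(conj(z)+1)^{1/4}, using the principal branch of complex powers. Then for every z in the open unit disc {z ∈ ℂ : |z| < 1}, the operator norm of the real Fréchet derivative satisfies ‖Dψ(z)‖ = a; in particular ‖Dψ(z)‖² = 2·|det Dψ(z)|, so ψ is 2-quasiconformal on the unit disc. -/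
open Complex

/-- The ℝ-linear map `h ↦ α h + β conj h`. -/
noncomputable def rpL (α β : ℂ) : ℂ →L[ℝ] ℂ :=
  α • (ContinuousLinearMap.id ℝ ℂ) + β • (Complex.conjCLE : ℂ ≃L[ℝ] ℂ).toContinuousLinearMap

lemma rpL_apply (α β h : ℂ) : rpL α β h = α * h + β * (starRingEnd ℂ) h := by
  simp [rpL, Complex.conjCLE_apply, smul_eq_mul]

lemma rpL_norm (α β : ℂ) : ‖rpL α β‖ = ‖α‖ + ‖β‖ := by
  refine le_antisymm ?_ ?_
  · refine ContinuousLinearMap.opNorm_le_bound _ (by positivity) fun h => ?_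
    rw [rpL_apply]
    calc ‖α * h + β * (starRingEnd ℂ) h‖ ≤ ‖α * h‖ + ‖β * (starRingEnd ℂ) h‖ := norm_add_le _ _
    _ = (‖α‖ + ‖β‖) * ‖h‖ := by
        simp [norm_mul]; ring
  · rcases eq_or_ne α 0 with hα | hα
    · have := (rpL α β).le_opNorm 1
      simpa [rpL_apply, hα] using this
    rcases eq_or_ne β 0 with hβ | hβ
    · have := (rpL α β).le_opNorm 1
      simpa [rpL_apply, hβ] using this
    · set u : ℂ := (starRingEnd ℂ) α * β with hu
      set w : ℂ := u ^ ((2 : ℕ)⁻¹ : ℂ) with hwdef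
      have hw2 : w ^ 2 = u := Complex.cpow_nat_inv_pow u two_ne_zero
      have hune : u ≠ 0 := mul_ne_zero (by simpa using hα) hβ
      have hwne : w ≠ 0 := by
        intro h; rw [h] at hw2; simp at hw2; exact hune hw2.symm
      have hwnorm : (0:ℝ) < ‖w‖ := norm_pos_iff.mpr hwne
      have hwabs : ‖w‖ ^ 2 = ‖α‖ * ‖β‖ := by
        rw [← norm_pow, hw2, hu, norm_mul, RCLike.norm_conj]
      -- key identity
      have hkey : (starRingEnd ℂ) α * (α * w + β * (starRingEnd ℂ) w)
          = ((‖α‖ ^ 2 + ‖α‖ * ‖β‖ : ℝ) : ℂ) * w := by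
        have h1 : (starRingEnd ℂ) α * α = ((‖α‖ ^ 2 : ℝ) : ℂ) := by
          rw [mul_comm, Complex.mul_conj, Complex.normSq_eq_norm_sq]
        have h2 : (starRingEnd ℂ) α * β * (starRingEnd ℂ) w
            = ((‖α‖ * ‖β‖ : ℝ) : ℂ) * w := by
          rw [← hu, ← hw2]
          calc w ^ 2 * (starRingEnd ℂ) w = (w * (starRingEnd ℂ) w) * w := by ring
          _ = ((Complex.normSq w : ℝ) : ℂ) * w := by rw [Complex.mul_conj]
          _ = ((‖α‖ * ‖β‖ : ℝ) : ℂ) * w := by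
              congr 1
              rw [Complex.normSq_eq_norm_sq, hwabs]
        calc (starRingEnd ℂ) α * (α * w + β * (starRingEnd ℂ) w)
            = ((starRingEnd ℂ) α * α) * w + ((starRingEnd ℂ) α * β * (starRingEnd ℂ) w) := by ring
        _ = ((‖α‖ ^ 2 : ℝ) : ℂ) * w + ((‖α‖ * ‖β‖ : ℝ) : ℂ) * w := by rw [h1, h2]
        _ = ((‖α‖ ^ 2 + ‖α‖ * ‖β‖ : ℝ) : ℂ) * w := by push_cast; ring
      have habs : ‖α * w + β * (starRingEnd ℂ) w‖ = (‖α‖ + ‖β‖) * ‖w‖ := by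
        have h0 := congrArg (fun t : ℂ => ‖t‖) hkey
        simp only [norm_mul] at h0
        rw [RCLike.norm_conj, Complex.norm_real, Real.norm_eq_abs,
          _root_.abs_of_nonneg (by positivity : (0:ℝ) ≤ ‖α‖ ^ 2 + ‖α‖ * ‖β‖)] at h0
        have hαpos : (0:ℝ) < ‖α‖ := norm_pos_iff.mpr hα
        apply mul_left_cancel₀ hαpos.ne'
        rw [h0]; ring
      have hle := (rpL α β).le_opNorm (w / (‖w‖ : ℂ))
      rw [rpL_apply] at hle
      have hnw : ‖w / (‖w‖ : ℂ)‖ = 1 := by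
        rw [norm_div, Complex.norm_real, Real.norm_eq_abs,
          _root_.abs_of_nonneg hwnorm.le, div_self hwnorm.ne']
      rw [hnw, mul_one] at hle
      refine le_trans (le_of_eq ?_) hle
      have hconj : (starRingEnd ℂ) (w / (‖w‖ : ℂ)) = (starRingEnd ℂ) w / (‖w‖ : ℂ) := by
        simp [map_div₀, Complex.conj_ofReal]
      rw [hconj]
      have heq : α * (w / (‖w‖:ℂ)) + β * ((starRingEnd ℂ) w / (‖w‖:ℂ))
          = (α * w + β * (starRingEnd ℂ) w) / (‖w‖:ℂ) := by ring
      rw [heq, norm_div, habs, Complex.norm_real, Real.norm_eq_abs,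
        _root_.abs_of_nonneg hwnorm.le, mul_div_assoc, div_self hwnorm.ne', mul_one]

lemma rpL_det (α β : ℂ) :
    LinearMap.det (rpL α β).toLinearMap = ‖α‖ ^ 2 - ‖β‖ ^ 2 := by
  rw [← LinearMap.det_toMatrix Complex.basisOneI]
  have hM : LinearMap.toMatrix Complex.basisOneI Complex.basisOneI (rpL α β).toLinearMap
      = !![α.re + β.re, -(α.im - β.im); α.im + β.im, α.re - β.re] := by
    ext i j
    fin_cases i <;> fin_cases j <;>
      simp [LinearMap.toMatrix_apply, rpL_apply, Complex.coe_basisOneI_repr,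
        Complex.coe_basisOneI, Complex.add_re, Complex.add_im] <;> ring
  rw [hM, Matrix.det_fin_two_of]
  have hα : ‖α‖ ^ 2 = α.re ^ 2 + α.im ^ 2 := by
    rw [Complex.sq_norm, Complex.normSq_apply]; ring
  have hβ : ‖β‖ ^ 2 = β.re ^ 2 + β.im ^ 2 := by
    rw [Complex.sq_norm, Complex.normSq_apply]; ring
  rw [hα, hβ]; ring

/-- The rose-petal map `ψ(z) = a·(z+1)^{3/4}·(conj(z)+1)^{1/4}` (principal
branch) satisfies `‖Dψ(z)‖ = a` on the open unit disc; in particular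
`‖Dψ(z)‖² = 2·|det Dψ(z)|`, so `ψ` is `2`-quasiconformal on the unit disc. -/
theorem rose_petal_map_quasiconformal (a : ℝ) (ha : 0 < a)
    (ψ : ℂ → ℂ)
    (hψ : ∀ z : ℂ, ψ z = (a : ℂ) * (z + 1) ^ ((3 : ℂ) / 4) *
      ((starRingEnd ℂ) z + 1) ^ ((1 : ℂ) / 4)) :
    ∀ z ∈ Metric.ball (0 : ℂ) 1,
      ‖fderiv ℝ ψ z‖ = a ∧
      ‖fderiv ℝ ψ z‖ ^ 2 = 2 * |LinearMap.det (fderiv ℝ ψ z).toLinearMap| := by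
  intro z hz
  have hzabs : ‖z‖ < 1 := by
    simpa [Complex.dist_eq] using hz
  have hre : 0 < (z + 1).re := by
    have h1 : |z.re| ≤ ‖z‖ := Complex.abs_re_le_norm z
    have := abs_le.mp h1
    simp only [Complex.add_re, Complex.one_re]
    linarith [this.1]
  have hs1 : z + 1 ∈ Complex.slitPlane := Complex.mem_slitPlane_iff.mpr (Or.inl hre)
  have hs2 : (starRingEnd ℂ) z + 1 ∈ Complex.slitPlane := by
    refine Complex.mem_slitPlane_iff.mpr (Or.inl ?_)
    simpa [Complex.add_re, Complex.conj_re] using hre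
  -- complex derivatives of the two factors
  have h1 : HasDerivAt (fun w : ℂ => (w + 1) ^ ((3:ℂ)/4))
      (((3:ℂ)/4) * (z + 1) ^ ((3:ℂ)/4 - 1)) z := by
    have := HasDerivAt.cpow_const (c := (3:ℂ)/4) ((hasDerivAt_id z).add_const (1:ℂ)) hs1
    simpa using this
  have h2 : HasDerivAt (fun w : ℂ => (w + 1) ^ ((1:ℂ)/4))
      (((1:ℂ)/4) * ((starRingEnd ℂ) z + 1) ^ ((1:ℂ)/4 - 1)) ((starRingEnd ℂ) z) := by
    have := HasDerivAt.cpow_const (c := (1:ℂ)/4)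
      ((hasDerivAt_id ((starRingEnd ℂ) z)).add_const (1:ℂ)) hs2
    simpa using this
  set c1 : ℂ := ((3:ℂ)/4) * (z + 1) ^ ((3:ℂ)/4 - 1) with hc1
  set c2 : ℂ := ((1:ℂ)/4) * ((starRingEnd ℂ) z + 1) ^ ((1:ℂ)/4 - 1) with hc2
  have hf : HasFDerivAt (fun w : ℂ => (w + 1) ^ ((3:ℂ)/4))
      ((ContinuousLinearMap.smulRight (1 : ℂ →L[ℂ] ℂ) c1).restrictScalars ℝ) z :=
    (h1.hasFDerivAt).restrictScalars ℝ
  have hconjd : HasFDerivAt (fun w : ℂ => (starRingEnd ℂ) w)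
      (Complex.conjCLE.toContinuousLinearMap) z :=
    Complex.conjCLE.toContinuousLinearMap.hasFDerivAt
  have hg : HasFDerivAt (fun w : ℂ => ((starRingEnd ℂ) w + 1) ^ ((1:ℂ)/4))
      (((ContinuousLinearMap.smulRight (1 : ℂ →L[ℂ] ℂ) c2).restrictScalars ℝ).comp
        Complex.conjCLE.toContinuousLinearMap) z :=
    ((h2.hasFDerivAt).restrictScalars ℝ).comp z hconjd
  have hmul := hf.mul hg
  have hprod := hmul.const_mul ((a:ℝ) : ℂ)
  have hfun : ψ = fun w : ℂ => ((a:ℝ):ℂ) *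
      ((w + 1) ^ ((3:ℂ)/4) * (((starRingEnd ℂ) w + 1) ^ ((1:ℂ)/4))) := by
    funext w; rw [hψ w]; ring
  set α : ℂ := ((a:ℝ):ℂ) * c1 * ((starRingEnd ℂ) z + 1) ^ ((1:ℂ)/4) with hα
  set β : ℂ := ((a:ℝ):ℂ) * (z + 1) ^ ((3:ℂ)/4) * c2 with hβ
  have hD : HasFDerivAt ψ (rpL α β) z := by
    rw [hfun]
    refine hprod.congr_fderiv ?_
    apply ContinuousLinearMap.ext
    intro h
    simp [rpL_apply, hα, hβ, ContinuousLinearMap.smulRight_apply, smul_eq_mul,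
      Complex.conjCLE_apply]
    ring
  have hfd : fderiv ℝ ψ z = rpL α β := hD.fderiv
  -- norms
  have hr : 0 < ‖z + 1‖ := by
    have : z + 1 ≠ 0 := Complex.slitPlane_ne_zero hs1
    exact norm_pos_iff.mpr this
  have habsconj : ‖(starRingEnd ℂ) z + 1‖ = ‖z + 1‖ := by
    have : (starRingEnd ℂ) z + 1 = (starRingEnd ℂ) (z + 1) := by
      simp [map_add]
    rw [this, Complex.norm_conj]
  have he1 : ((3:ℂ)/4 - 1) = (((-(1/4) : ℝ)) : ℂ) := by norm_num
  have he2 : ((1:ℂ)/4) = (((1/4 : ℝ)) : ℂ) := by norm_num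
  have he3 : ((3:ℂ)/4) = (((3/4 : ℝ)) : ℂ) := by norm_num
  have he4 : ((1:ℂ)/4 - 1) = (((-(3/4) : ℝ)) : ℂ) := by norm_num
  set r : ℝ := ‖z + 1‖ with hrdef
  have hnα : ‖α‖ = 3 * a / 4 := by
    rw [hα, hc1, he1, he2]
    simp only [norm_mul, Complex.norm_cpow_real, habsconj, ← hrdef]
    rw [Complex.norm_real, Real.norm_eq_abs, _root_.abs_of_nonneg ha.le]
    have : r ^ (-(1/4) : ℝ) * r ^ ((1/4) : ℝ) = 1 := by
      rw [← Real.rpow_add hr]; norm_num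
    have habs34 : ‖(3:ℂ)/4‖ = 3/4 := by
      norm_num [norm_div]
    rw [habs34]
    nlinarith [this]
  have hnβ : ‖β‖ = a / 4 := by
    rw [hβ, hc2, he4, he3]
    simp only [norm_mul, Complex.norm_cpow_real, habsconj, ← hrdef]
    rw [Complex.norm_real, Real.norm_eq_abs, _root_.abs_of_nonneg ha.le]
    have : r ^ ((3/4) : ℝ) * r ^ (-(3/4) : ℝ) = 1 := by
      rw [← Real.rpow_add hr]; norm_num
    have habs14 : ‖(1:ℂ)/4‖ = 1/4 := by
      norm_num [norm_div]
    rw [habs14]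
    nlinarith [this]
  have hnorm : ‖fderiv ℝ ψ z‖ = a := by
    rw [hfd, rpL_norm, hnα, hnβ]; ring
  refine ⟨hnorm, ?_⟩
  rw [hnorm, hfd, rpL_det, hnα, hnβ]
  rw [_root_.abs_of_nonneg (by nlinarith : (0:ℝ) ≤ (3*a/4)^2 - (a/4)^2)]
  ring
end

section
/- Let n ≥ 2 be a natural number and A > B ≥ 0 real numbers, and define ψ : ℂ → ℂ by ψ(z) = A·(z + zⁿ/n) + B·(conj(z) + conj(z)ⁿ/n). Then for every z ∈ ℂ, the operator norm of the real Fréchet derivative satisfies ‖Dψ(z)‖² = ((A+B)/(A−B)) · |det Dψ(z)|; in particular ψ is K-quasiconformal with K = (A+B)/(A−B). -/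
open Complex

private theorem epicycloid_key (n : ℕ) (hn : 2 ≤ n)
    (A B : ℝ) (hB : 0 ≤ B) (hAB : B < A)
    (ψ : ℂ → ℂ)
    (hψ : ∀ z : ℂ, ψ z = (A : ℂ) * (z + z ^ n / (n : ℂ)) +
      (B : ℂ) * ((starRingEnd ℂ) z + ((starRingEnd ℂ) z) ^ n / (n : ℂ)))
    (z : ℂ) :
    ‖fderiv ℝ ψ z‖ ^ 2 =
        ((A + B) / (A - B)) * |LinearMap.det (fderiv ℝ ψ z).toLinearMap| := by
  have hA : 0 < A := lt_of_le_of_lt hB hAB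
  have hn0 : (n : ℂ) ≠ 0 := by exact_mod_cast Nat.pos_of_ne_zero (by omega) |>.ne'
  set w : ℂ := 1 + z ^ (n-1) with hw
  set Df : ℂ →L[ℝ] ℂ :=
    (ContinuousLinearMap.smulRight (1 : ℂ →L[ℂ] ℂ) w).restrictScalars ℝ with hDfdef
  set L : ℂ →L[ℝ] ℂ :=
    (A : ℂ) • Df + (B : ℂ) • ((Complex.conjCLE : ℂ →L[ℝ] ℂ).comp Df) with hLdef
  -- ψ rewritten
  have hψ' : ψ = fun z : ℂ => (A : ℂ) * (z + z ^ n / (n : ℂ)) +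
      (B : ℂ) * ((starRingEnd ℂ) (z + z ^ n / (n : ℂ))) := by
    funext u
    rw [hψ u]
    simp [map_add, map_div₀, map_pow]
  -- derivative
  have hder : HasFDerivAt ψ L z := by
    rw [hψ']
    have hf : HasDerivAt (fun z : ℂ => z + z ^ n / (n : ℂ)) w z := by
      have h1 := (hasDerivAt_pow n z).div_const (n : ℂ)
      have h2 : (n : ℂ) * z ^ (n - 1) / (n : ℂ) = z ^ (n-1) := by field_simp
      rw [h2] at h1
      exact (hasDerivAt_id z).add h1
    have hDf := (hf.hasFDerivAt).restrictScalars ℝ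
    exact (hDf.const_mul (A : ℂ)).add
      (((Complex.conjCLE.hasFDerivAt).comp z hDf).const_mul (B : ℂ))
  have hfd : fderiv ℝ ψ z = L := hder.fderiv
  have hLapp : ∀ h : ℂ, L h = (A : ℂ) * (w * h) + (B : ℂ) * (starRingEnd ℂ) (w * h) := by
    intro h
    simp [hLdef, hDfdef, ContinuousLinearMap.smul_apply, mul_comm]
  -- norm
  have habs : ‖L‖ = (A + B) * ‖w‖ := by
    apply le_antisymm
    · apply ContinuousLinearMap.opNorm_le_bound
      · positivity
      · intro h
        rw [hLapp h]
        calc ‖(A : ℂ) * (w * h) + (B : ℂ) * (starRingEnd ℂ) (w * h)‖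
            ≤ ‖(A : ℂ) * (w * h)‖ + ‖(B : ℂ) * (starRingEnd ℂ) (w * h)‖ := norm_add_le _ _
          _ = (A + B) * ‖w‖ * ‖h‖ := by
              simp [map_mul, Complex.norm_real,
                abs_of_pos hA, _root_.abs_of_nonneg hB]
              ring
    · rcases eq_or_ne w 0 with h0 | h0
      · have : L = 0 := by
          ext h
          simp [hLapp, h0]
        simp [this, h0]
      · have hwa : (0:ℝ) < ‖w‖ := by
          simpa using (norm_pos_iff.mpr h0)
        set h0c : ℂ := (starRingEnd ℂ) w / (‖w‖ : ℂ) with hh0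
        have hnh : ‖h0c‖ = 1 := by
          simp [hh0, map_div₀, Complex.norm_real, abs_of_pos hwa, div_self hwa.ne']
        have hwh : w * h0c = (‖w‖ : ℂ) := by
          have hca : (‖w‖ : ℂ) ≠ 0 := by exact_mod_cast hwa.ne'
          rw [hh0, mul_div_assoc', Complex.mul_conj, Complex.normSq_eq_norm_sq]
          push_cast
          rw [sq, mul_div_assoc, div_self hca, mul_one]
        have hval : L h0c = ((A + B) * ‖w‖ : ℝ) := by
          rw [hLapp, hwh, Complex.conj_ofReal]
          push_cast
          ring
        have := L.le_opNorm h0c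
        rw [hval, hnh, mul_one] at this
        calc (A + B) * ‖w‖ = ‖((A + B) * ‖w‖ : ℝ)‖ := by
              rw [Real.norm_eq_abs, _root_.abs_of_nonneg (by positivity)]
          _ ≤ ‖L‖ := by exact_mod_cast this
  -- determinant
  have hdet : LinearMap.det (L : ℂ →ₗ[ℝ] ℂ) = (A^2 - B^2) * Complex.normSq w := by
    rw [← LinearMap.det_toMatrix Complex.basisOneI, Matrix.det_fin_two]
    have hb0 : (Complex.basisOneI : Module.Basis (Fin 2) ℝ ℂ) 0 = 1 := by
      simp [Complex.coe_basisOneI]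
    have hb1 : (Complex.basisOneI : Module.Basis (Fin 2) ℝ ℂ) 1 = Complex.I := by
      simp [Complex.coe_basisOneI]
    simp only [LinearMap.toMatrix_apply, ContinuousLinearMap.coe_coe, hb0, hb1, hLapp]
    simp [Complex.normSq_apply, Complex.mul_re, Complex.mul_im]
    ring
  have hd2 : |LinearMap.det (L : ℂ →ₗ[ℝ] ℂ)| = (A^2 - B^2) * Complex.normSq w := by
    rw [hdet, _root_.abs_of_nonneg]
    have : B^2 ≤ A^2 := by nlinarith
    have := Complex.normSq_nonneg w
    nlinarith
  rw [hfd, habs, hd2]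
  have hABne : A - B ≠ 0 := by linarith
  have hsq : ‖w‖ ^ 2 = Complex.normSq w := Complex.sq_norm w
  rw [← hsq]
  field_simp
  ring

/-- The epicycloid map `ψ(z) = A·(z + zⁿ/n) + B·(conj(z) + conj(z)ⁿ/n)`
satisfies `‖Dψ(z)‖² = ((A+B)/(A−B))·|det Dψ(z)|` at every point; in particular
it is `K`-quasiconformal with `K = (A+B)/(A−B)`. -/
theorem epicycloid_map_quasiconformal (n : ℕ) (hn : 2 ≤ n)
    (A B : ℝ) (hB : 0 ≤ B) (hAB : B < A)
    (ψ : ℂ → ℂ)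
    (hψ : ∀ z : ℂ, ψ z = (A : ℂ) * (z + z ^ n / (n : ℂ)) +
      (B : ℂ) * ((starRingEnd ℂ) z + ((starRingEnd ℂ) z) ^ n / (n : ℂ))) :
    (∀ z : ℂ, ‖fderiv ℝ ψ z‖ ^ 2 =
        ((A + B) / (A - B)) * |LinearMap.det (fderiv ℝ ψ z).toLinearMap|) ∧
    (∀ z : ℂ, ‖fderiv ℝ ψ z‖ ^ 2 ≤
        ((A + B) / (A - B)) * |LinearMap.det (fderiv ℝ ψ z).toLinearMap|) := by
  exact ⟨fun z => epicycloid_key n hn A B hB hAB ψ hψ z,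
    fun z => (epicycloid_key n hn A B hB hAB ψ hψ z).le⟩
end

section
/- Let n ≥ 2 be a natural number and A > B ≥ 0 real numbers, and define ψ : ℂ → ℂ by ψ(z) = A·(z + zⁿ/n) + B·(conj(z) + conj(z)ⁿ/n). Then for every z in the open unit disc {z ∈ ℂ : |z| < 1}, one has (Re ψ(z))²/((A+B)·(n+1)/n)² + (Im ψ(z))²/((A−B)·(n+1)/n)² < 1; i.e. ψ maps the open unit disc into the interior of the ellipse with semi-axes (A+B)(n+1)/n and (A−B)(n+1)/n. -/
/-- The epicycloid map `ψ(z) = A·(z + zⁿ/n) + B·(conj(z) + conj(z)ⁿ/n)` maps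
the open unit disc into the interior of the ellipse with semi-axes
`(A+B)(n+1)/n` and `(A−B)(n+1)/n`. -/
theorem epicycloid_map_into_ellipse (n : ℕ) (hn : 2 ≤ n)
    (A B : ℝ) (hB : 0 ≤ B) (hAB : B < A)
    (ψ : ℂ → ℂ)
    (hψ : ∀ z : ℂ, ψ z = (A : ℂ) * (z + z ^ n / (n : ℂ)) +
      (B : ℂ) * ((starRingEnd ℂ) z + ((starRingEnd ℂ) z) ^ n / (n : ℂ))) :
    ∀ z ∈ Metric.ball (0 : ℂ) 1,
      (ψ z).re ^ 2 / ((A + B) * ((n : ℝ) + 1) / (n : ℝ)) ^ 2 +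
        (ψ z).im ^ 2 / ((A - B) * ((n : ℝ) + 1) / (n : ℝ)) ^ 2 < 1 := by
  intro z hz
  rw [Metric.mem_ball, dist_zero_right] at hz
  have hn0 : (0:ℝ) < (n:ℝ) := by positivity
  set w : ℂ := z + z ^ n / (n : ℂ) with hw
  have hconj : (starRingEnd ℂ) z + ((starRingEnd ℂ) z) ^ n / (n : ℂ)
      = (starRingEnd ℂ) w := by
    simp [hw, map_add, map_div₀, map_pow]
  have hψz : ψ z = (A : ℂ) * w + (B : ℂ) * (starRingEnd ℂ) w := by
    rw [hψ, hconj]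
  have hre : (ψ z).re = (A + B) * w.re := by
    rw [hψz]
    simp [Complex.add_re, Complex.mul_re, Complex.conj_re, Complex.conj_im]
    ring
  have him : (ψ z).im = (A - B) * w.im := by
    rw [hψz]
    simp [Complex.add_im, Complex.mul_im, Complex.conj_re, Complex.conj_im]
    ring
  have hzle : ‖z‖ ≤ 1 := le_of_lt hz
  have hzn : ‖z ^ n‖ < 1 := by
    rw [norm_pow]
    calc ‖z‖ ^ n ≤ ‖z‖ := by
          apply pow_le_of_le_one (norm_nonneg z) hzle
          omega
      _ < 1 := hz
  have hwlt : ‖w‖ < ((n:ℝ) + 1) / n := by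
    calc ‖w‖ ≤ ‖z‖ + ‖z ^ n / (n : ℂ)‖ :=
          norm_add_le _ _
      _ = ‖z‖ + ‖z ^ n‖ / n := by
          rw [norm_div, Complex.norm_natCast]
      _ < 1 + 1 / n := by
          gcongr
      _ = ((n:ℝ) + 1) / n := by field_simp
  have hAB1 : (0:ℝ) < A + B := by linarith
  have hAB2 : (0:ℝ) < A - B := by linarith
  have hc : (0:ℝ) < ((n:ℝ) + 1) / n := by positivity
  have key : (ψ z).re ^ 2 / ((A + B) * ((n : ℝ) + 1) / (n : ℝ)) ^ 2 +
      (ψ z).im ^ 2 / ((A - B) * ((n : ℝ) + 1) / (n : ℝ)) ^ 2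
      = (w.re ^ 2 + w.im ^ 2) / (((n:ℝ) + 1) / n) ^ 2 := by
    rw [hre, him]
    field_simp
  rw [key]
  rw [div_lt_one (by positivity)]
  have habs : w.re ^ 2 + w.im ^ 2 = ‖w‖ ^ 2 := by
    rw [Complex.sq_norm, Complex.normSq_apply]; ring
  rw [habs]
  exact pow_lt_pow_left₀ hwlt (norm_nonneg w) (by norm_num)
end
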